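/- arXiv:2006.13689 — 6 statements merged into one kernel-verified Lean document; each statement's English description precedes it below -/
import Mathlib

section
/- Let x : [0,T] → ℝ^d be continuous, let b : ℝ^d → ℝ^d satisfy a one-sided Lipschitz condition with constant C_b and be locally Lipschitz continuous with modulus Υ_b, and let ξ ∈ ℝ^d. Then there exists a unique continuous z : [0,T] → ℝ^d satisfying z(t) = ξ + ∫₀ᵗ b(z(s) + x(s)) ds for all t ∈ [0,T]. Moreover, sup_{t∈[0,T]} |z(t)| ≤ r_z, where r_z := e^{C_b T} |ξ| + ∫₀^T e^{C_b(T−s)} |b(x(s))| ds, and z is Lipschitz continuous on [0,T] with Lipschitz constant at most r_z · Υ_b(r_z + sup_{t∈[0,T]} |x(t)|) + sup_{t∈[0,T]} |b(x(t))|. -/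
/-!
Replace `b(· + x t)` by `b(P_r · + x t)`, where `P_r` is the radial retraction onto the closed
ball of radius `r := r_z`. The truncated field is globally Lipschitz and bounded, so Picard–Lindelöf
gives a solution on all of `[0, T]`. Since `P_r y` is a nonnegative multiple `c • y` with `c ≤ 1`,
the one-sided Lipschitz condition still yields `⟪z', z⟫ ≤ C_b ‖z‖² + ‖b(x)‖ ‖z‖`, and a Gronwall
argument for `√(‖z‖² + ε²)` bounds `‖z t‖` by the Duhamel expression whose value at `T` is `r_z`.
Hence the truncation is never active and `z` solves the original equation. Uniqueness is the same
Gronwall estimate applied to the difference of two solutions, and the Lipschitz bound comes from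
bounding the integrand on the ball of radius `r_z + sup ‖x‖`.
-/

open scoped RealInnerProductSpace

open Set Real Metric intervalIntegral

section RadialRetraction

variable {E : Type*} [NormedAddCommGroup E] [NormedSpace ℝ E] {r : ℝ}

noncomputable def radialRetraction (r : ℝ) (v : E) : E := min 1 (r / ‖v‖) • v

lemma exists_mem_Icc_radialRetraction_eq_smul (hr : 0 ≤ r) (v : E) :
    ∃ c ∈ Icc (0 : ℝ) 1, radialRetraction r v = c • v :=
  ⟨_, ⟨le_min zero_le_one (by positivity), min_le_left _ _⟩, rfl⟩

lemma norm_radialRetraction (hr : 0 ≤ r) (v : E) : ‖radialRetraction r v‖ = min ‖v‖ r := by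
  rcases eq_or_ne v 0 with rfl | hv
  · simp [radialRetraction, hr]
  rw [radialRetraction, norm_smul, Real.norm_eq_abs, abs_of_nonneg (by positivity),
    min_mul_of_nonneg _ _ (norm_nonneg v), one_mul, div_mul_cancel₀ _ (norm_ne_zero_iff.2 hv)]

lemma radialRetraction_of_norm_le {v : E} (h : ‖v‖ ≤ r) : radialRetraction r v = v := by
  rcases eq_or_ne v 0 with rfl | hv
  · simp [radialRetraction]
  rw [radialRetraction, min_eq_left ((one_le_div (norm_pos_iff.2 hv)).2 h), one_smul]

lemma norm_radialRetraction_sub_le_of_norm_le (hr : 0 ≤ r) {v w : E} (h : ‖w‖ ≤ ‖v‖) :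
    ‖radialRetraction r v - radialRetraction r w‖ ≤ 2 * ‖v - w‖ := by
  set cv := min 1 (r / ‖v‖)
  set cw := min 1 (r / ‖w‖)
  have hcv₀ : 0 ≤ cv := le_min zero_le_one (by positivity)
  have hcv₁ : cv ≤ 1 := min_le_left _ _
  have hcvw : cv * ‖w‖ ≤ cw * ‖w‖ := by
    rcases eq_or_ne w 0 with rfl | hw
    · simp
    gcongr
    exact min_le_min_left _ (div_le_div_of_nonneg_left hr (norm_pos_iff.2 hw) h)
  have hv : cv * ‖v‖ = min ‖v‖ r := by
    rw [← norm_radialRetraction hr, radialRetraction, norm_smul, Real.norm_of_nonneg hcv₀]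
  have hw : cw * ‖w‖ = min ‖w‖ r := by
    rw [← norm_radialRetraction hr, radialRetraction, norm_smul,
      Real.norm_of_nonneg (le_min zero_le_one (by positivity))]
  -- The term `(cw - cv) • w` is controlled by `‖v‖ - ‖w‖`, since `t ↦ min t r` is monotone
  -- and `cv ≤ 1`.
  have hsplit : cv • v - cw • w = cv • (v - w) - (cw - cv) • w := by
    rw [smul_sub, sub_smul]; abel
  have h₁ : cv * ‖v - w‖ ≤ ‖v - w‖ := mul_le_of_le_one_left (norm_nonneg _) hcv₁
  have h₂ : cv * (‖v‖ - ‖w‖) ≤ ‖v‖ - ‖w‖ := mul_le_of_le_one_left (sub_nonneg.2 h) hcv₁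
  have h₃ : min ‖w‖ r ≤ min ‖v‖ r := min_le_min_right r h
  have h₄ : ‖v‖ - ‖w‖ ≤ ‖v - w‖ := norm_sub_norm_le v w
  calc ‖cv • v - cw • w‖ ≤ ‖cv • (v - w)‖ + ‖(cw - cv) • w‖ := hsplit ▸ norm_sub_le _ _
    _ = cv * ‖v - w‖ + (cw * ‖w‖ - cv * ‖w‖) := by
      rw [norm_smul, norm_smul, Real.norm_of_nonneg hcv₀, Real.norm_eq_abs, ← abs_norm w,
        ← abs_mul, abs_norm, sub_mul, abs_of_nonneg (sub_nonneg.2 hcvw)]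
    _ ≤ 2 * ‖v - w‖ := by nlinarith

lemma lipschitzWith_radialRetraction (hr : 0 ≤ r) :
    LipschitzWith 2 (radialRetraction (E := E) r) := by
  refine LipschitzWith.of_dist_le_mul fun v w => ?_
  rw [dist_eq_norm, dist_eq_norm, NNReal.coe_ofNat]
  rcases le_total ‖w‖ ‖v‖ with h | h
  · exact norm_radialRetraction_sub_le_of_norm_le hr h
  · rw [norm_sub_rev, norm_sub_rev v]
    exact norm_radialRetraction_sub_le_of_norm_le hr h

end RadialRetraction

section OneSidedLipschitz

variable {E : Type*} [NormedAddCommGroup E] [InnerProductSpace ℝ E]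

def OneSidedLipschitzWith (C : ℝ) (b : E → E) : Prop :=
  ∀ p q, ⟪b p - b q, p - q⟫ ≤ C * ‖p - q‖ ^ 2

lemma OneSidedLipschitzWith.inner_sub_smul_add_le {C : ℝ} {b : E → E}
    (hb : OneSidedLipschitzWith C b) (hC : 0 ≤ C) {c : ℝ} (hc : c ∈ Icc (0 : ℝ) 1) (y u : E) :
    ⟪b (c • y + u) - b u, y⟫ ≤ C * ‖y‖ ^ 2 := by
  rcases hc.1.eq_or_lt with rfl | hc₀
  · simp only [zero_smul, zero_add, sub_self, inner_zero_left]
    positivity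
  have h := hb (c • y + u) u
  rw [add_sub_cancel_right, inner_smul_right, norm_smul, Real.norm_of_nonneg hc₀.le] at h
  refine le_of_mul_le_mul_left ?_ hc₀
  calc c * ⟪b (c • y + u) - b u, y⟫ ≤ c * (c * (C * ‖y‖ ^ 2)) := by linarith
    _ ≤ c * (C * ‖y‖ ^ 2) :=
      mul_le_mul_of_nonneg_left (mul_le_of_le_one_left (by positivity) hc.2) hc₀.le

end OneSidedLipschitz

section Integral

variable {E : Type*} [NormedAddCommGroup E] [NormedSpace ℝ E] {G z : ℝ → E} {T : ℝ}

lemma hasDerivAt_integral_of_continuousOn [CompleteSpace E] {a b t : ℝ}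
    (hG : ContinuousOn G (Icc a b)) (ht : t ∈ Ioo a b) :
    HasDerivAt (fun s => ∫ τ in a..s, G τ) (G t) t :=
  integral_hasDerivAt_right
    ((hG.mono (Icc_subset_Icc_right ht.2.le)).intervalIntegrable_of_Icc ht.1.le)
    ((hG.mono Ioo_subset_Icc_self).stronglyMeasurableAtFilter isOpen_Ioo t ht)
    (hG.continuousAt (Icc_mem_nhds ht.1 ht.2))

lemma hasDerivAt_of_eq_add_integral [CompleteSpace E] {ξ : E} (hG : ContinuousOn G (Icc 0 T))
    (hz : ∀ t ∈ Icc 0 T, z t = ξ + ∫ s in (0 : ℝ)..t, G s) {t : ℝ} (ht : t ∈ Ioo 0 T) :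
    HasDerivAt z (G t) t :=
  ((hasDerivAt_integral_of_continuousOn hG ht).const_add ξ).congr_of_eventuallyEq
    (Filter.eventually_of_mem (Icc_mem_nhds ht.1 ht.2) hz)

lemma eq_add_integral_of_hasDerivWithinAt [CompleteSpace E] (hG : ContinuousOn G (Icc 0 T))
    (hz : ∀ t ∈ Icc 0 T, HasDerivWithinAt z (G t) (Icc 0 T) t) {t : ℝ} (ht : t ∈ Icc 0 T) :
    z t = z 0 + ∫ s in (0 : ℝ)..t, G s := by
  have hsub : Icc 0 t ⊆ Icc 0 T := Icc_subset_Icc_right ht.2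
  rw [integral_eq_sub_of_hasDeriv_right_of_le ht.1
    (fun s hs => (hz s (hsub hs)).continuousWithinAt.mono hsub)
    (fun s hs => ((hz s (hsub (Ioo_subset_Icc_self hs))).hasDerivAt
      (Icc_mem_nhds hs.1 (hs.2.trans_le ht.2))).hasDerivWithinAt)
    ((hG.mono hsub).intervalIntegrable_of_Icc ht.1), add_sub_cancel]

lemma norm_sub_le_of_eq_add_integral {ξ : E} {K : ℝ} (hG : ContinuousOn G (Icc 0 T))
    (hz : ∀ t ∈ Icc 0 T, z t = ξ + ∫ s in (0 : ℝ)..t, G s) (hGK : ∀ t ∈ Icc 0 T, ‖G t‖ ≤ K)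
    {s t : ℝ} (hs : s ∈ Icc 0 T) (ht : t ∈ Icc 0 T) : ‖z t - z s‖ ≤ K * |t - s| := by
  have hint : ∀ τ ∈ Icc 0 T, IntervalIntegrable G MeasureTheory.volume 0 τ := fun τ hτ =>
    (hG.mono (Icc_subset_Icc_right hτ.2)).intervalIntegrable_of_Icc hτ.1
  rw [hz t ht, hz s hs, add_sub_add_left_eq_sub, integral_interval_sub_left (hint t ht) (hint s hs)]
  exact norm_integral_le_of_norm_le_const fun τ hτ =>
    hGK τ (uIcc_subset_Icc hs ht (uIoc_subset_uIcc hτ))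

end Integral

section Duhamel

/-- Duhamel's formula: the solution at time `t` of `u' = C u + φ`, `u 0 = a`. -/
noncomputable def duhamel (C a : ℝ) (φ : ℝ → ℝ) (t : ℝ) : ℝ :=
  exp (C * t) * a + ∫ s in (0 : ℝ)..t, exp (C * (t - s)) * φ s

variable {C a T : ℝ} {φ : ℝ → ℝ}

lemma duhamel_eq_exp_mul (t : ℝ) :
    duhamel C a φ t = exp (C * t) * (a + ∫ s in (0 : ℝ)..t, exp (-(C * s)) * φ s) := by
  rw [duhamel, mul_add, ← integral_const_mul]
  congr 2 with s
  rw [← mul_assoc, ← exp_add]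
  ring_nf

lemma duhamel_zero : duhamel C a φ 0 = a := by simp [duhamel]

lemma duhamel_monotoneOn (hC : 0 ≤ C) (ha : 0 ≤ a) (hφ : ContinuousOn φ (Icc 0 T))
    (hφ₀ : ∀ s ∈ Icc 0 T, 0 ≤ φ s) : MonotoneOn (duhamel C a φ) (Icc 0 T) := by
  intro s hs t ht hst
  have hψ : ContinuousOn (fun τ => exp (-(C * τ)) * φ τ) (Icc 0 T) := by fun_prop
  have hψ₀ : ∀ τ ∈ Icc 0 T, 0 ≤ exp (-(C * τ)) * φ τ := fun τ hτ =>
    mul_nonneg (exp_pos _).le (hφ₀ τ hτ)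
  have hI : 0 ≤ ∫ τ in (0 : ℝ)..s, exp (-(C * τ)) * φ τ :=
    integral_nonneg hs.1 fun τ hτ => hψ₀ τ (Icc_subset_Icc_right hs.2 hτ)
  rw [duhamel_eq_exp_mul, duhamel_eq_exp_mul]
  gcongr
  exact integral_mono_interval le_rfl hs.1 hst
    ((MeasureTheory.ae_restrict_iff' measurableSet_Ioc).2 (Filter.Eventually.of_forall fun τ hτ =>
      hψ₀ τ ⟨hτ.1.le, hτ.2.trans ht.2⟩))
    ((hψ.mono (Icc_subset_Icc_right ht.2)).intervalIntegrable_of_Icc ht.1)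

lemma le_duhamel_of_hasDerivAt {u u' : ℝ → ℝ} (hu : ContinuousOn u (Icc 0 T))
    (hu' : ∀ t ∈ Ioo 0 T, HasDerivAt u (u' t) t) (hφ : ContinuousOn φ (Icc 0 T))
    (hle : ∀ t ∈ Ioo 0 T, u' t ≤ C * u t + φ t) {t : ℝ} (ht : t ∈ Icc 0 T) :
    u t ≤ duhamel C (u 0) φ t := by
  set ψ := fun s => exp (-(C * s)) * φ s
  have hψ : ContinuousOn ψ (Icc 0 T) := by fun_prop
  have hanti : AntitoneOn (fun s => exp (-(C * s)) * u s - ∫ τ in (0 : ℝ)..s, ψ τ) (Icc 0 T) := by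
    refine antitoneOn_of_hasDerivWithinAt_nonpos (convex_Icc 0 T)
      (f' := fun s => exp (-(C * s)) * (u' s - C * u s - φ s)) ?_ (fun s hs => ?_) (fun s hs => ?_)
    · have hprim := continuousOn_primitive_interval (μ := MeasureTheory.volume) (a := 0) (b := T)
        (hψ.integrableOn_Icc.mono_set (uIcc_of_le (ht.1.trans ht.2)).subset)
      rw [uIcc_of_le (ht.1.trans ht.2)] at hprim
      exact ((by fun_prop : Continuous fun s => exp (-(C * s))).continuousOn.mul hu).sub hprim
    · rw [interior_Icc] at hs
      have hexp : HasDerivAt (fun s => exp (-(C * s))) (exp (-(C * s)) * -C) s := by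
        simpa using ((hasDerivAt_id s).const_mul C).neg.exp
      refine (((hexp.mul (hu' s hs)).sub
        (hasDerivAt_integral_of_continuousOn hψ hs)).congr_deriv ?_).hasDerivWithinAt
      simp only [ψ]
      ring
    · rw [interior_Icc] at hs
      exact mul_nonpos_of_nonneg_of_nonpos (exp_pos _).le (by linarith [hle s hs])
  have hmono := hanti ⟨le_rfl, ht.1.trans ht.2⟩ ht ht.1
  simp only [mul_zero, neg_zero, exp_zero, one_mul, integral_same, sub_zero] at hmono
  rw [duhamel_eq_exp_mul]
  calc u t = exp (C * t) * (exp (-(C * t)) * u t) := by rw [← mul_assoc, ← exp_add]; simp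
    _ ≤ exp (C * t) * (u 0 + ∫ s in (0 : ℝ)..t, ψ s) := by gcongr; linarith

end Duhamel

lemma norm_le_duhamel_of_inner_le {E : Type*} [NormedAddCommGroup E] [InnerProductSpace ℝ E]
    {f f' : ℝ → E} {φ : ℝ → ℝ} {C T : ℝ} (hC : 0 ≤ C) (hf : ContinuousOn f (Icc 0 T))
    (hf' : ∀ t ∈ Ioo 0 T, HasDerivAt f (f' t) t) (hφ : ContinuousOn φ (Icc 0 T))
    (hφ₀ : ∀ t ∈ Ioo 0 T, 0 ≤ φ t)
    (hle : ∀ t ∈ Ioo 0 T, ⟪f' t, f t⟫ ≤ C * ‖f t‖ ^ 2 + φ t * ‖f t‖)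
    {t : ℝ} (ht : t ∈ Icc 0 T) : ‖f t‖ ≤ duhamel C ‖f 0‖ φ t := by
  refine le_of_forall_pos_le_add fun δ hδ => ?_
  -- `‖f‖` need not be differentiable where `f` vanishes, so run Gronwall on `√(‖f‖² + ε²)`.
  set ε := δ / exp (C * t)
  have hε : 0 < ε := by positivity
  set u := fun s => √(‖f s‖ ^ 2 + ε ^ 2)
  have hu₀ : ∀ s, 0 < u s := fun s => sqrt_pos.2 (by positivity)
  have hfu : ∀ s, ‖f s‖ ≤ u s := fun s =>
    (le_sqrt (norm_nonneg _) (by positivity)).2 (le_add_of_nonneg_right (sq_nonneg ε))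
  have hu' : ∀ s ∈ Ioo 0 T, HasDerivAt u (⟪f' s, f s⟫ / u s) s := fun s hs => by
    refine (((hf' s hs).norm_sq.add_const (ε ^ 2)).sqrt (by positivity)).congr_deriv ?_
    rw [real_inner_comm]
    simp only [u]
    field_simp
  have hu'_le : ∀ s ∈ Ioo 0 T, ⟪f' s, f s⟫ / u s ≤ C * u s + φ s := fun s hs => by
    rw [div_le_iff₀ (hu₀ s)]
    have h₁ := mul_le_mul_of_nonneg_left (pow_le_pow_left₀ (norm_nonneg _) (hfu s) 2) hC
    have h₂ := mul_le_mul_of_nonneg_left (hfu s) (hφ₀ s hs)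
    linarith [hle s hs]
  have hu_cont : ContinuousOn u (Icc 0 T) := by fun_prop
  calc ‖f t‖ ≤ u t := hfu t
    _ ≤ duhamel C (u 0) φ t := le_duhamel_of_hasDerivAt hu_cont hu' hφ hu'_le ht
    _ ≤ duhamel C (‖f 0‖ + ε) φ t := by
      unfold duhamel
      gcongr
      exact (sqrt_le_left (by positivity)).2 (by nlinarith [mul_nonneg (norm_nonneg (f 0)) hε.le])
    _ = duhamel C ‖f 0‖ φ t + δ := by
      simp only [duhamel, ε]
      field_simp
      ring

lemma exists_hasDerivWithinAt_Icc_of_lipschitzWith {E : Type*} [NormedAddCommGroup E]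
    [NormedSpace ℝ E] [CompleteSpace E] {f : ℝ → E → E} {T L : ℝ} (hT : 0 ≤ T) {K : NNReal}
    (hlip : ∀ t ∈ Icc 0 T, LipschitzWith K (f t)) (hcont : ∀ y, ContinuousOn (f · y) (Icc 0 T))
    (hbdd : ∀ t ∈ Icc 0 T, ∀ y, ‖f t y‖ ≤ L) (ξ : E) :
    ∃ α : ℝ → E, α 0 = ξ ∧ ∀ t ∈ Icc 0 T, HasDerivWithinAt α (f t (α t)) (Icc 0 T) t := by
  have hPL : IsPicardLindelof f (⟨0, le_rfl, hT⟩ : Icc 0 T) ξ (L.toNNReal * T.toNNReal) 0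
      L.toNNReal K :=
    { lipschitzOnWith := fun t ht => (hlip t ht).lipschitzOnWith
      continuousOn := fun y _ => hcont y
      norm_le := fun t ht y _ => (hbdd t ht y).trans (le_coe_toNNReal L)
      mul_max_le := by simp [hT] }
  exact hPL.exists_eq_forall_mem_Icc_hasDerivWithinAt₀

lemma continuous_of_forall_lipschitzOnWith_closedBall {E : Type*} [SeminormedAddCommGroup E]
    {F : Type*} [PseudoMetricSpace F] {b : E → F}
    (hb : ∀ R ≥ 0, ∃ K, LipschitzOnWith K b (closedBall 0 R)) : Continuous b := by
  refine LocallyLipschitz.continuous fun v => ?_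
  obtain ⟨K, hK⟩ := hb (‖v‖ + 1) (by positivity)
  exact ⟨K, closedBall 0 (‖v‖ + 1), closedBall_mem_nhds_of_mem (by simp), hK⟩

lemma norm_apply_add_le_of_norm_sub_le {E F : Type*} [SeminormedAddCommGroup E]
    [SeminormedAddCommGroup F] {b : E → F} {K ρ M : ℝ}
    (hlip : ∀ p ∈ closedBall (0 : E) (ρ + M), ∀ q ∈ closedBall (0 : E) (ρ + M),
      ‖b p - b q‖ ≤ K * ‖p - q‖)
    (hK : 0 ≤ K) {y v : E} (hy : ‖y‖ ≤ ρ) (hv : ‖v‖ ≤ M) : ‖b (y + v)‖ ≤ ρ * K + ‖b v‖ := by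
  have h := hlip (y + v) (mem_closedBall_zero_iff.2 ((norm_add_le _ _).trans (add_le_add hy hv)))
    v (mem_closedBall_zero_iff.2 (by linarith [norm_nonneg y]))
  rw [add_sub_cancel_right] at h
  calc ‖b (y + v)‖ ≤ ‖b (y + v) - b v‖ + ‖b v‖ := norm_le_norm_sub_add _ _
    _ ≤ ρ * K + ‖b v‖ := by
      gcongr
      rw [mul_comm]
      exact h.trans (by gcongr)

section TransformedODE

variable {E : Type*} [NormedAddCommGroup E] [InnerProductSpace ℝ E]
  {b : E → E} {x : ℝ → E} {C T : ℝ}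

lemma exists_hasDerivWithinAt_radialRetraction_add [CompleteSpace E] {r : ℝ} (hr : 0 ≤ r)
    (hT : 0 ≤ T) (hb : ∀ R ≥ 0, ∃ K, LipschitzOnWith K b (closedBall 0 R))
    (hx : ContinuousOn x (Icc 0 T)) (ξ : E) : ∃ α : ℝ → E, α 0 = ξ ∧ ∀ t ∈ Icc 0 T,
      HasDerivWithinAt α (b (radialRetraction r (α t) + x t)) (Icc 0 T) t := by
  obtain ⟨M, hM⟩ := isCompact_Icc.bddAbove_image hx.norm
  have hxM : ∀ t ∈ Icc 0 T, ‖x t‖ ≤ M := fun t ht => hM (mem_image_of_mem _ ht)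
  have hM₀ : 0 ≤ M := (norm_nonneg _).trans (hxM 0 (left_mem_Icc.2 hT))
  have hmem : ∀ t ∈ Icc 0 T, ∀ y, radialRetraction r y + x t ∈ closedBall (0 : E) (r + M) :=
    fun t ht y => mem_closedBall_zero_iff.2 <|
      (norm_add_le _ _).trans
        (add_le_add (norm_radialRetraction hr y ▸ min_le_right _ _) (hxM t ht))
  obtain ⟨K, hK⟩ := hb (r + M) (by positivity)
  refine exists_hasDerivWithinAt_Icc_of_lipschitzWith hT (K := K * 2)
    (L := K * (r + M) + ‖b 0‖) (fun t ht => LipschitzWith.of_dist_le_mul fun p q => ?_)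
    (fun y => hK.continuousOn.comp (continuousOn_const.add hx) fun t ht => hmem t ht y)
    (fun t ht y => ?_) ξ
  · calc dist (b (radialRetraction r p + x t)) (b (radialRetraction r q + x t))
        ≤ K * dist (radialRetraction r p + x t) (radialRetraction r q + x t) :=
          hK.dist_le_mul _ (hmem t ht p) _ (hmem t ht q)
      _ ≤ K * (2 * dist p q) := by
          rw [dist_add_right]
          gcongr
          simpa using (lipschitzWith_radialRetraction hr).dist_le_mul p q
      _ = ↑(K * 2) * dist p q := by push_cast; ring
  · have h := hK.norm_sub_le (hmem t ht y) (mem_closedBall_self (by positivity))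
    rw [sub_zero] at h
    calc ‖b (radialRetraction r y + x t)‖
        ≤ ‖b (radialRetraction r y + x t) - b 0‖ + ‖b 0‖ := norm_le_norm_sub_add _ _
      _ ≤ K * (r + M) + ‖b 0‖ := by
          gcongr
          exact h.trans (by gcongr; exact mem_closedBall_zero_iff.1 (hmem t ht y))

lemma norm_le_duhamel_of_hasDerivWithinAt_radialRetraction_add (hC : 0 ≤ C)
    (hb : OneSidedLipschitzWith C b) (hbc : Continuous b) (hx : ContinuousOn x (Icc 0 T))
    {r : ℝ} (hr : 0 ≤ r) {α : ℝ → E}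
    (hα : ∀ t ∈ Icc 0 T, HasDerivWithinAt α (b (radialRetraction r (α t) + x t)) (Icc 0 T) t)
    {t : ℝ} (ht : t ∈ Icc 0 T) : ‖α t‖ ≤ duhamel C ‖α 0‖ (fun s => ‖b (x s)‖) t := by
  refine norm_le_duhamel_of_inner_le hC (fun s hs => (hα s hs).continuousWithinAt)
    (fun s hs => (hα s (Ioo_subset_Icc_self hs)).hasDerivAt (Icc_mem_nhds hs.1 hs.2))
    (hbc.comp_continuousOn hx).norm (fun _ _ => norm_nonneg _) (fun s _ => ?_) ht
  obtain ⟨c, hc, hPc⟩ := exists_mem_Icc_radialRetraction_eq_smul hr (α s)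
  calc ⟪b (radialRetraction r (α s) + x s), α s⟫
      = ⟪b (c • α s + x s) - b (x s), α s⟫ + ⟪b (x s), α s⟫ := by
        rw [hPc, inner_sub_left]; ring
    _ ≤ C * ‖α s‖ ^ 2 + ‖b (x s)‖ * ‖α s‖ :=
        add_le_add (hb.inner_sub_smul_add_le hC hc _ _) (real_inner_le_norm _ _)

theorem exists_eq_add_integral_forall_norm_le_duhamel [CompleteSpace E] (hT : 0 ≤ T) (hC : 0 ≤ C)
    (hb : OneSidedLipschitzWith C b) (hb_lip : ∀ R ≥ 0, ∃ K, LipschitzOnWith K b (closedBall 0 R))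
    (hx : ContinuousOn x (Icc 0 T)) (ξ : E) :
    ∃ z : ℝ → E, ContinuousOn z (Icc 0 T) ∧
      (∀ t ∈ Icc 0 T, z t = ξ + ∫ s in (0 : ℝ)..t, b (z s + x s)) ∧
      ∀ t ∈ Icc 0 T, ‖z t‖ ≤ duhamel C ‖ξ‖ (fun s => ‖b (x s)‖) T := by
  have hbc := continuous_of_forall_lipschitzOnWith_closedBall hb_lip
  have hmono : MonotoneOn (duhamel C ‖ξ‖ fun s => ‖b (x s)‖) (Icc 0 T) :=
    duhamel_monotoneOn hC (norm_nonneg ξ) (hbc.comp_continuousOn hx).norm fun s _ => norm_nonneg _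
  set r := duhamel C ‖ξ‖ (fun s => ‖b (x s)‖) T
  have hr : 0 ≤ r := by
    have h := hmono (left_mem_Icc.2 hT) (right_mem_Icc.2 hT) hT
    rw [duhamel_zero] at h
    exact (norm_nonneg ξ).trans h
  obtain ⟨z, hz₀, hz⟩ := exists_hasDerivWithinAt_radialRetraction_add hr hT hb_lip hx ξ
  have hbound : ∀ t ∈ Icc 0 T, ‖z t‖ ≤ r := fun t ht =>
    (norm_le_duhamel_of_hasDerivWithinAt_radialRetraction_add hC hb hbc hx hr hz ht).trans
      (hz₀ ▸ hmono ht (right_mem_Icc.2 hT) ht.2)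
  have hz' : ∀ t ∈ Icc 0 T, HasDerivWithinAt z (b (z t + x t)) (Icc 0 T) t := fun t ht => by
    simpa only [radialRetraction_of_norm_le (hbound t ht)] using hz t ht
  have hzc : ContinuousOn z (Icc 0 T) := fun t ht => (hz' t ht).continuousWithinAt
  refine ⟨z, hzc, fun t ht => ?_, hbound⟩
  rw [eq_add_integral_of_hasDerivWithinAt (G := fun s => b (z s + x s))
    (hbc.comp_continuousOn (hzc.add hx)) hz' ht, hz₀]

theorem eqOn_of_eq_add_integral [CompleteSpace E] (hC : 0 ≤ C) (hb : OneSidedLipschitzWith C b)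
    (hbc : Continuous b) (hx : ContinuousOn x (Icc 0 T)) {ξ : E} {w z : ℝ → E}
    (hw : ContinuousOn w (Icc 0 T))
    (hw_eq : ∀ t ∈ Icc 0 T, w t = ξ + ∫ s in (0 : ℝ)..t, b (w s + x s))
    (hz : ContinuousOn z (Icc 0 T))
    (hz_eq : ∀ t ∈ Icc 0 T, z t = ξ + ∫ s in (0 : ℝ)..t, b (z s + x s)) :
    EqOn w z (Icc 0 T) := by
  intro t ht
  have h₀ : w 0 - z 0 = 0 := by
    rw [hw_eq 0 ⟨le_rfl, ht.1.trans ht.2⟩, hz_eq 0 ⟨le_rfl, ht.1.trans ht.2⟩]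
    simp
  have hderiv : ∀ s ∈ Ioo 0 T,
      HasDerivAt (fun s => w s - z s) (b (w s + x s) - b (z s + x s)) s := fun s hs =>
    (hasDerivAt_of_eq_add_integral (hbc.comp_continuousOn (hw.add hx)) hw_eq hs).sub
      (hasDerivAt_of_eq_add_integral (hbc.comp_continuousOn (hz.add hx)) hz_eq hs)
  have h := norm_le_duhamel_of_inner_le (φ := 0) hC (hw.sub hz) hderiv continuousOn_const
    (fun _ _ => le_rfl) (fun s _ => by simpa using hb (w s + x s) (z s + x s)) ht
  simp only [Pi.sub_apply, h₀, norm_zero, duhamel, mul_zero, Pi.zero_apply, integral_zero,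
    add_zero] at h
  exact sub_eq_zero.1 (norm_le_zero_iff.1 h)

end TransformedODE

theorem global_existence_transformed_ode_general {d : ℕ} (T : ℝ) (hT : 0 < T)
    (b : EuclideanSpace ℝ (Fin d) → EuclideanSpace ℝ (Fin d))
    (x : ℝ → EuclideanSpace ℝ (Fin d)) (hx : ContinuousOn x (Set.Icc 0 T))
    (C_b : ℝ) (hCb : 0 ≤ C_b)
    (hb_osl : ∀ ς ζ : EuclideanSpace ℝ (Fin d),
      ⟪b ς - b ζ, ς - ζ⟫ ≤ C_b * ‖ς - ζ‖ ^ 2)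
    (Υ : ℝ → ℝ)
    (hΥ_nonneg : ∀ r ∈ Set.Ici (0 : ℝ), 0 ≤ Υ r)
    (hb_loclip : ∀ r ∈ Set.Ici (0 : ℝ),
      ∀ ς ∈ Metric.closedBall (0 : EuclideanSpace ℝ (Fin d)) r,
      ∀ ζ ∈ Metric.closedBall (0 : EuclideanSpace ℝ (Fin d)) r,
        ‖b ς - b ζ‖ ≤ Υ r * ‖ς - ζ‖)
    (ξ : EuclideanSpace ℝ (Fin d))
    (r_z : ℝ)
    (hr_z : r_z = Real.exp (C_b * T) * ‖ξ‖ +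
      ∫ s in (0 : ℝ)..T, Real.exp (C_b * (T - s)) * ‖b (x s)‖) :
    ∃ z : ℝ → EuclideanSpace ℝ (Fin d),
      (ContinuousOn z (Set.Icc 0 T) ∧
        ∀ t ∈ Set.Icc (0 : ℝ) T, z t = ξ + ∫ s in (0 : ℝ)..t, b (z s + x s)) ∧
      (∀ w : ℝ → EuclideanSpace ℝ (Fin d), ContinuousOn w (Set.Icc 0 T) →
        (∀ t ∈ Set.Icc (0 : ℝ) T, w t = ξ + ∫ s in (0 : ℝ)..t, b (w s + x s)) →
        Set.EqOn w z (Set.Icc 0 T)) ∧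
      (∀ t ∈ Set.Icc (0 : ℝ) T, ‖z t‖ ≤ r_z) ∧
      (∀ s ∈ Set.Icc (0 : ℝ) T, ∀ t ∈ Set.Icc (0 : ℝ) T,
        ‖z t - z s‖ ≤
          (r_z * Υ (r_z + sSup ((fun u => ‖x u‖) '' Set.Icc (0 : ℝ) T)) +
            sSup ((fun u => ‖b (x u)‖) '' Set.Icc (0 : ℝ) T)) * |t - s|) := by
  have hb_lip : ∀ R ≥ 0, ∃ K, LipschitzOnWith K b (closedBall 0 R) := fun R hR =>
    ⟨(Υ R).toNNReal, LipschitzOnWith.of_dist_le_mul fun p hp q hq => by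
      rw [dist_eq_norm, dist_eq_norm, coe_toNNReal _ (hΥ_nonneg R hR)]
      exact hb_loclip R hR p hp q hq⟩
  have hbc := continuous_of_forall_lipschitzOnWith_closedBall hb_lip
  obtain ⟨z, hzc, hz_eq, hz_le⟩ :=
    exists_eq_add_integral_forall_norm_le_duhamel hT.le hCb hb_osl hb_lip hx ξ
  rw [← show r_z = duhamel C_b ‖ξ‖ (fun s => ‖b (x s)‖) T from hr_z] at hz_le
  refine ⟨z, ⟨hzc, hz_eq⟩,
    fun w hw hw_eq => eqOn_of_eq_add_integral hCb hb_osl hbc hx hw hw_eq hzc hz_eq, hz_le,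
    fun s hs t ht => norm_sub_le_of_eq_add_integral (hbc.comp_continuousOn (hzc.add hx))
      hz_eq (fun u hu => ?_) hs ht⟩
  have hxM : ‖x u‖ ≤ sSup ((fun u => ‖x u‖) '' Icc 0 T) :=
    le_csSup (isCompact_Icc.bddAbove_image hx.norm) (mem_image_of_mem _ hu)
  have hbxM : ‖b (x u)‖ ≤ sSup ((fun u => ‖b (x u)‖) '' Icc 0 T) :=
    le_csSup (isCompact_Icc.bddAbove_image (hbc.comp_continuousOn hx).norm) (mem_image_of_mem _ hu)
  have hR : 0 ≤ r_z + sSup ((fun u => ‖x u‖) '' Icc 0 T) :=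
    add_nonneg ((norm_nonneg _).trans (hz_le u hu)) ((norm_nonneg _).trans hxM)
  exact (norm_apply_add_le_of_norm_sub_le (hb_loclip _ hR) (hΥ_nonneg _ hR) (hz_le u hu) hxM).trans
    (by gcongr)

/-- Global existence and uniqueness for `z' = b(z + x)`, `z(0) = ξ`, together
with the sup-norm bound `r_z` and the Lipschitz bound
`r_z Υ_b(r_z + ‖x‖_∞) + ‖b ∘ x‖_∞`. -/
theorem global_existence_transformed_ode {d : ℕ} (T : ℝ) (hT : 0 < T)
    (b : EuclideanSpace ℝ (Fin d) → EuclideanSpace ℝ (Fin d))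
    (x : ℝ → EuclideanSpace ℝ (Fin d)) (hx : ContinuousOn x (Set.Icc 0 T))
    (C_b : ℝ) (hCb : 0 ≤ C_b)
    (hb_osl : ∀ ς ζ : EuclideanSpace ℝ (Fin d),
      ⟪b ς - b ζ, ς - ζ⟫ ≤ C_b * ‖ς - ζ‖ ^ 2)
    (Υ : ℝ → ℝ) (hΥ_mono : MonotoneOn Υ (Set.Ici 0))
    (hΥ_nonneg : ∀ r ∈ Set.Ici (0 : ℝ), 0 ≤ Υ r)
    (hb_loclip : ∀ r ∈ Set.Ici (0 : ℝ),
      ∀ ς ∈ Metric.closedBall (0 : EuclideanSpace ℝ (Fin d)) r,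
      ∀ ζ ∈ Metric.closedBall (0 : EuclideanSpace ℝ (Fin d)) r,
        ‖b ς - b ζ‖ ≤ Υ r * ‖ς - ζ‖)
    (ξ : EuclideanSpace ℝ (Fin d))
    (r_z : ℝ)
    (hr_z : r_z = Real.exp (C_b * T) * ‖ξ‖ +
      ∫ s in (0 : ℝ)..T, Real.exp (C_b * (T - s)) * ‖b (x s)‖) :
    ∃ z : ℝ → EuclideanSpace ℝ (Fin d),
      (ContinuousOn z (Set.Icc 0 T) ∧
        ∀ t ∈ Set.Icc (0 : ℝ) T, z t = ξ + ∫ s in (0 : ℝ)..t, b (z s + x s)) ∧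
      (∀ w : ℝ → EuclideanSpace ℝ (Fin d), ContinuousOn w (Set.Icc 0 T) →
        (∀ t ∈ Set.Icc (0 : ℝ) T, w t = ξ + ∫ s in (0 : ℝ)..t, b (w s + x s)) →
        Set.EqOn w z (Set.Icc 0 T)) ∧
      (∀ t ∈ Set.Icc (0 : ℝ) T, ‖z t‖ ≤ r_z) ∧
      (∀ s ∈ Set.Icc (0 : ℝ) T, ∀ t ∈ Set.Icc (0 : ℝ) T,
        ‖z t - z s‖ ≤
          (r_z * Υ (r_z + sSup ((fun u => ‖x u‖) '' Set.Icc (0 : ℝ) T)) +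
            sSup ((fun u => ‖b (x u)‖) '' Set.Icc (0 : ℝ) T)) * |t - s|) :=
  global_existence_transformed_ode_general T hT b x hx C_b hCb hb_osl Υ hΥ_nonneg hb_loclip ξ r_z
    hr_z
end

section
/- Let b : ℝ^d → ℝ^d be continuous and satisfy a one-sided Lipschitz condition with constant C_b, let N ∈ ℕ, h > 0 with C_b h < 1, ξ ∈ ℝ^d, and let (x_j)_{0 ≤ j ≤ N} be any sequence in ℝ^d. Then there exists a unique sequence (y_j)_{0 ≤ j ≤ N} in ℝ^d satisfying y_0 = ξ and y_{j+1} = y_j + h b(y_{j+1}) + x_{j+1} − x_j for all j ∈ {0, …, N−1}. -/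
/-!
Writing the scheme as `Φ y_{j+1} = y_j + x_{j+1} - x_j` with `Φ z = z - h • b z`, the one-sided
Lipschitz bound makes `Φ` strongly monotone with modulus `1 - C_b h > 0`, so it suffices that a
continuous strongly monotone map of a finite-dimensional inner product space is bijective.
Injectivity is immediate. Surjectivity goes by induction on the dimension: along each line
`u + ℝ v` the equation `⟪Φ z, v⟫ = ⟪y, v⟫` has a unique solution `u + σ u • v` (intermediate
value theorem), `σ` is continuous by strong monotonicity, and projecting `Φ (u + σ u • v)`
onto `(ℝ ∙ v)ᗮ` gives a continuous strongly monotone map of the hyperplane.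
-/

open scoped RealInnerProductSpace
open Function Filter Topology Module Submodule

section StronglyMonotone

variable {E : Type*} [NormedAddCommGroup E] [InnerProductSpace ℝ E]

def StronglyMonotone (m : ℝ) (F : E → E) : Prop :=
  ∀ x y, m * ‖x - y‖ ^ 2 ≤ ⟪F x - F y, x - y⟫

variable {m : ℝ} {F : E → E}

theorem StronglyMonotone.mul_norm_sub_le (hF : StronglyMonotone m F) (x y : E) :
    m * ‖x - y‖ ≤ ‖F x - F y‖ := by
  rcases (norm_nonneg (x - y)).eq_or_lt with h0 | hpos
  · rw [← h0, mul_zero]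
    exact norm_nonneg _
  · refine le_of_mul_le_mul_right ?_ hpos
    nlinarith [hF x y, real_inner_le_norm (F x - F y) (x - y)]

theorem StronglyMonotone.injective (hm : 0 < m) (hF : StronglyMonotone m F) : Injective F := by
  intro x y hxy
  have h := hF.mul_norm_sub_le x y
  rw [hxy, sub_self, norm_zero] at h
  exact sub_eq_zero.1 (norm_eq_zero.1 (le_antisymm (nonpos_of_mul_nonpos_right h hm)
    (norm_nonneg _)))

theorem stronglyMonotone_sub_smul {b : E → E} {C h : ℝ}
    (hb : ∀ x y, ⟪b x - b y, x - y⟫ ≤ C * ‖x - y‖ ^ 2) (hh : 0 ≤ h) :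
    StronglyMonotone (1 - C * h) fun z => z - h • b z := by
  intro x y
  have hdiff : x - h • b x - (y - h • b y) = (x - y) - h • (b x - b y) := by
    rw [smul_sub]; abel
  rw [hdiff, inner_sub_left, real_inner_smul_left, real_inner_self_eq_norm_sq]
  nlinarith [mul_le_mul_of_nonneg_left (hb x y) hh]

theorem StronglyMonotone.inner_comp_add_smul (hF : StronglyMonotone m F) (u v : E) :
    StronglyMonotone (m * ‖v‖ ^ 2) fun s : ℝ => ⟪F (u + s • v), v⟫ := by
  intro s t
  have hdiff : u + s • v - (u + t • v) = (s - t) • v := by rw [sub_smul]; abel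
  have h := hF (u + s • v) (u + t • v)
  rw [hdiff, norm_smul, real_inner_smul_right, inner_sub_left] at h
  rw [Real.inner_apply, Real.norm_eq_abs] at *
  nlinarith [h]

theorem StronglyMonotone.mul_sub_le_of_real {g : ℝ → ℝ} (hg : StronglyMonotone m g) {s t : ℝ}
    (hts : t ≤ s) : m * (s - t) ≤ g s - g t := by
  rcases hts.eq_or_lt with rfl | hlt
  · simp
  · have h := hg s t
    rw [Real.inner_apply, Real.norm_eq_abs, sq_abs] at h
    nlinarith

theorem StronglyMonotone.surjective_of_real {g : ℝ → ℝ} (hm : 0 < m) (hg : StronglyMonotone m g)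
    (hc : Continuous g) : Surjective g := by
  refine hc.surjective ?_ ?_
  · refine tendsto_atTop_mono' _ ((eventually_ge_atTop 0).mono fun s hs => ?_)
      (tendsto_atTop_add_const_left _ (g 0) (tendsto_id.const_mul_atTop hm))
    linarith [hg.mul_sub_le_of_real hs, show m * id s = m * s from rfl]
  · refine tendsto_atBot_mono' _ ((eventually_le_atBot 0).mono fun s hs => ?_)
      (tendsto_atBot_add_const_left _ (g 0) (tendsto_id.const_mul_atBot hm))
    linarith [hg.mul_sub_le_of_real hs, show m * id s = m * s from rfl]

theorem exists_continuous_solution_of_stronglyMonotone {X : Type*} [TopologicalSpace X]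
    {g : X → ℝ → ℝ} (hg : Continuous fun p : X × ℝ => g p.1 p.2) (hm : 0 < m)
    (hmono : ∀ u, StronglyMonotone m (g u)) (c : ℝ) :
    ∃ σ : X → ℝ, Continuous σ ∧ ∀ u, g u (σ u) = c := by
  choose σ hσ using fun u => (hmono u).surjective_of_real hm
    (hg.comp (Continuous.prodMk_right u)) c
  refine ⟨σ, continuous_iff_continuousAt.2 fun v => ?_, hσ⟩
  have hlim : Tendsto (fun u => m⁻¹ * |g u (σ v) - c|) (𝓝 v) (𝓝 0) := by
    have : Continuous fun u => m⁻¹ * |g u (σ v) - c| :=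
      continuous_const.mul (((hg.comp (continuous_id.prodMk continuous_const)).sub
        continuous_const).abs)
    simpa [hσ v] using this.tendsto v
  refine tendsto_iff_dist_tendsto_zero.2 (squeeze_zero (fun _ => dist_nonneg) (fun u => ?_) hlim)
  have h := (hmono u).mul_norm_sub_le (σ u) (σ v)
  rw [hσ u, Real.norm_eq_abs, Real.norm_eq_abs, abs_sub_comm c] at h
  rw [Real.dist_eq, le_inv_mul_iff₀ hm]
  exact h

theorem StronglyMonotone.orthogonalProjectionOnto_comp (hF : StronglyMonotone m F) (hm : 0 ≤ m)
    {K : Submodule ℝ E} [K.HasOrthogonalProjection] {φ : K → E} (hφ : ∀ u, φ u - u ∈ Kᗮ)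
    (hFφ : ∀ u w, F (φ u) - F (φ w) ∈ K) :
    StronglyMonotone m fun u => K.orthogonalProjectionOnto (F (φ u)) := by
  intro u w
  set r := (φ u - u) - (φ w - w)
  have hr : r ∈ Kᗮ := sub_mem (hφ u) (hφ w)
  have hsplit : φ u - φ w = ((u - w : K) : E) + r := by
    simp only [r, Submodule.coe_sub]; abel
  have hnorm : ‖((u - w : K) : E)‖ ^ 2 ≤ ‖φ u - φ w‖ ^ 2 := by
    rw [hsplit, sq, sq,
      norm_add_sq_eq_norm_sq_add_norm_sq_real (inner_right_of_mem_orthogonal (u - w).2 hr)]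
    nlinarith [norm_nonneg r]
  have hinner : ⟪F (φ u) - F (φ w), φ u - φ w⟫ = ⟪F (φ u) - F (φ w), ((u - w : K) : E)⟫ := by
    rw [hsplit, inner_add_right, inner_right_of_mem_orthogonal (hFφ u w) hr, add_zero]
  show m * ‖((u - w : K) : E)‖ ^ 2 ≤ _
  rw [← map_sub, inner_orthogonalProjectionOnto_eq_of_mem_right, ← hinner]
  exact (mul_le_mul_of_nonneg_left hnorm hm).trans (hF _ _)

theorem StronglyMonotone.surjective_of_surjective_orthogonal_span (hm : 0 < m)
    (hF : StronglyMonotone m F) (hc : Continuous F) {v : E} (hv : v ≠ 0)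
    (hK : ∀ G : (ℝ ∙ v)ᗮ → (ℝ ∙ v)ᗮ, Continuous G → StronglyMonotone m G → Surjective G) :
    Surjective F := by
  intro y
  set K := (ℝ ∙ v)ᗮ
  obtain ⟨σ, hσc, hσ⟩ := exists_continuous_solution_of_stronglyMonotone
    (g := fun (u : K) s => ⟪F (u + s • v), v⟫) (by fun_prop)
    (mul_pos hm (by positivity)) (fun u => hF.inner_comp_add_smul u v) ⟪y, v⟫
  set φ : K → E := fun u => u + σ u • v
  have hφ : ∀ u, φ u - u ∈ Kᗮ := fun u => le_orthogonal_orthogonal _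
    (by simpa [φ] using smul_mem _ (σ u) (mem_span_singleton_self v))
  have hFy : ∀ u, F (φ u) - y ∈ K := fun u => mem_orthogonal_singleton_iff_inner_right.2
    (by rw [inner_sub_right, real_inner_comm, hσ u, real_inner_comm, sub_self])
  have hG := hF.orthogonalProjectionOnto_comp hm.le hφ
    (fun u w => by simpa using sub_mem (hFy u) (hFy w))
  obtain ⟨u, hu⟩ := hK _ (by fun_prop) hG (K.orthogonalProjectionOnto y)
  have hperp : F (φ u) - y ∈ Kᗮ := orthogonalProjectionOnto_eq_zero_iff.1
    (by rw [map_sub]; exact sub_eq_zero.2 hu)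
  exact ⟨φ u, sub_eq_zero.1 (inner_self_eq_zero.1 (inner_right_of_mem_orthogonal (hFy u) hperp))⟩

theorem StronglyMonotone.surjective [FiniteDimensional ℝ E] (hm : 0 < m)
    (hF : StronglyMonotone m F) (hc : Continuous F) : Surjective F := by
  suffices ∀ n, ∀ (V : Type _) [NormedAddCommGroup V] [InnerProductSpace ℝ V]
      [FiniteDimensional ℝ V], finrank ℝ V = n →
      ∀ G : V → V, Continuous G → StronglyMonotone m G → Surjective G from
    this _ E rfl F hc hF
  intro n
  induction n with
  | zero =>
    intro V _ _ _ hV G _ _ y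
    have := finrank_zero_iff.1 hV
    exact ⟨y, Subsingleton.elim _ _⟩
  | succ n ih =>
    intro V _ _ _ hV G hGc hG
    obtain ⟨v, hv⟩ := (finrank_pos_iff_exists_ne_zero (R := ℝ)).1 (by rw [hV]; omega)
    refine hG.surjective_of_surjective_orthogonal_span hm hGc hv (ih _ ?_)
    have := finrank_add_finrank_orthogonal (ℝ ∙ v)
    rw [finrank_span_singleton hv, hV] at this
    omega

end StronglyMonotone

theorem Fin.existsUnique_of_existsUnique_step {α : Type*} {N : ℕ} (a : α)
    (R : Fin N → α → α → Prop) (hR : ∀ j p, ∃! q, R j p q) :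
    ∃! y : Fin (N + 1) → α, y 0 = a ∧ ∀ j : Fin N, R j (y j.castSucc) (y j.succ) := by
  choose f hf hf_unique using hR
  refine ⟨fun i => Fin.induction a f i, ⟨Fin.induction_zero .., fun j => ?_⟩, ?_⟩
  · simpa only [Fin.induction_succ] using hf j _
  · rintro z ⟨hz0, hz⟩
    funext i
    induction i using Fin.induction with
    | zero => simpa using hz0
    | succ j ih => rw [Fin.induction_succ, ← ih]; exact hf_unique _ _ _ (hz j)

theorem implicit_euler_well_posedness_general {d : ℕ}
    (b : EuclideanSpace ℝ (Fin d) → EuclideanSpace ℝ (Fin d))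
    (hb_cont : Continuous b) (C_b : ℝ)
    (hb : ∀ ς ζ : EuclideanSpace ℝ (Fin d),
      ⟪b ς - b ζ, ς - ζ⟫ ≤ C_b * ‖ς - ζ‖ ^ 2)
    (N : ℕ) (h : ℝ) (hh : 0 < h) (hCh : C_b * h < 1)
    (ξ : EuclideanSpace ℝ (Fin d))
    (x : Fin (N + 1) → EuclideanSpace ℝ (Fin d)) :
    ∃! y : Fin (N + 1) → EuclideanSpace ℝ (Fin d),
      y 0 = ξ ∧
      ∀ j : Fin N,
        y j.succ = y j.castSucc + h • b (y j.succ) + x j.succ - x j.castSucc := by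
  have hm : 0 < 1 - C_b * h := by linarith
  have hF := stronglyMonotone_sub_smul hb hh.le
  have hbij : Bijective fun z => z - h • b z :=
    ⟨hF.injective hm, hF.surjective hm (by fun_prop)⟩
  refine Fin.existsUnique_of_existsUnique_step ξ
    (fun j p q => q = p + h • b q + x j.succ - x j.castSucc) fun j p => ?_
  refine (existsUnique_congr fun q => ?_).1 (hbij.existsUnique (p + x j.succ - x j.castSucc))
  rw [sub_eq_iff_eq_add]
  exact Eq.congr_right (by abel)

/-- Well-posedness of the implicit Euler scheme
`y_{j+1} = y_j + h b(y_{j+1}) + x_{j+1} - x_j`, `y_0 = ξ`. -/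
theorem implicit_euler_well_posedness {d : ℕ}
    (b : EuclideanSpace ℝ (Fin d) → EuclideanSpace ℝ (Fin d))
    (hb_cont : Continuous b) (C_b : ℝ) (hCb : 0 ≤ C_b)
    (hb : ∀ ς ζ : EuclideanSpace ℝ (Fin d),
      ⟪b ς - b ζ, ς - ζ⟫ ≤ C_b * ‖ς - ζ‖ ^ 2)
    (N : ℕ) (h : ℝ) (hh : 0 < h) (hCh : C_b * h < 1)
    (ξ : EuclideanSpace ℝ (Fin d))
    (x : Fin (N + 1) → EuclideanSpace ℝ (Fin d)) :
    ∃! y : Fin (N + 1) → EuclideanSpace ℝ (Fin d),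
      y 0 = ξ ∧
      ∀ j : Fin N,
        y j.succ = y j.castSucc + h • b (y j.succ) + x j.succ - x j.castSucc :=
  implicit_euler_well_posedness_general b hb_cont C_b hb N h hh hCh ξ x
end

section
/- Let b : ℝ^d → ℝ^d satisfy a one-sided Lipschitz condition with constant C_b, let x ∈ ℝ^d, h > 0, and suppose ŷ, ŷ⁺ ∈ ℝ^d satisfy ŷ⁺ = ŷ + h b(ŷ⁺ + x). Then |ŷ⁺| − |ŷ| ≤ C_b h |ŷ⁺| + h |b(x)|. -/
open scoped RealInnerProductSpace

/-! The one-sided Lipschitz condition makes `id - h • b` co-expansive with factor `1 - C h`.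
The implicit Euler step says exactly that `id - h • b` maps `ŷ⁺ + x` and `x` to points differing
by `ŷ + h • b x`, so `(1 - C h) ‖ŷ⁺‖ ≤ ‖ŷ + h • b x‖ ≤ ‖ŷ‖ + h ‖b x‖`. -/

variable {E : Type*} [NormedAddCommGroup E] [InnerProductSpace ℝ E]

def OneSidedLipschitz (C : ℝ) (b : E → E) : Prop :=
  ∀ ς ζ, ⟪b ς - b ζ, ς - ζ⟫ ≤ C * ‖ς - ζ‖ ^ 2

theorem mul_norm_le_norm_of_mul_norm_sq_le_inner {c : ℝ} {u v : E}
    (huv : c * ‖u‖ ^ 2 ≤ ⟪v, u⟫) : c * ‖u‖ ≤ ‖v‖ := by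
  rcases (norm_nonneg u).eq_or_lt with hu | hu
  · simp [← hu]
  · have : c * ‖u‖ * ‖u‖ ≤ ‖v‖ * ‖u‖ := by
      nlinarith [real_inner_le_norm v u]
    exact le_of_mul_le_mul_right this hu

theorem OneSidedLipschitz.mul_norm_sub_le_norm_sub_smul {C h : ℝ} {b : E → E}
    (hb : OneSidedLipschitz C b) (hh : 0 ≤ h) (ς ζ : E) :
    (1 - C * h) * ‖ς - ζ‖ ≤ ‖(ς - h • b ς) - (ζ - h • b ζ)‖ := by
  apply mul_norm_le_norm_of_mul_norm_sq_le_inner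
  have hdiff : (ς - h • b ς) - (ζ - h • b ζ) = (ς - ζ) - h • (b ς - b ζ) := by
    rw [smul_sub]; abel
  rw [hdiff, inner_sub_left, real_inner_smul_left, real_inner_self_eq_norm_sq]
  nlinarith [mul_le_mul_of_nonneg_left (hb ς ζ) hh]

theorem implicit_euler_one_step_estimate_general {d : ℕ}
    (b : EuclideanSpace ℝ (Fin d) → EuclideanSpace ℝ (Fin d))
    (C_b : ℝ)
    (hb : ∀ ς ζ : EuclideanSpace ℝ (Fin d),
      ⟪b ς - b ζ, ς - ζ⟫ ≤ C_b * ‖ς - ζ‖ ^ 2)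
    (x : EuclideanSpace ℝ (Fin d)) (h : ℝ) (hh : 0 < h)
    (yhat yplus : EuclideanSpace ℝ (Fin d))
    (hstep : yplus = yhat + h • b (yplus + x)) :
    ‖yplus‖ - ‖yhat‖ ≤ C_b * h * ‖yplus‖ + h * ‖b x‖ := by
  have hresolvent : (yplus + x - h • b (yplus + x)) - (x - h • b x) = yhat + h • b x := by
    nth_rewrite 1 [hstep]; abel
  have hcoexp := OneSidedLipschitz.mul_norm_sub_le_norm_sub_smul hb hh.le (yplus + x) x
  rw [hresolvent, add_sub_cancel_right] at hcoexp
  have htriangle : ‖yhat + h • b x‖ ≤ ‖yhat‖ + h * ‖b x‖ := by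
    simpa [norm_smul, abs_of_pos hh] using norm_add_le yhat (h • b x)
  linarith

/-- One-step estimate for the shifted implicit Euler recursion
`yhat⁺ = yhat + h b(yhat⁺ + x)`: `‖yhat⁺‖ - ‖yhat‖ ≤ C_b h ‖yhat⁺‖ + h ‖b x‖`. -/
theorem implicit_euler_one_step_estimate {d : ℕ}
    (b : EuclideanSpace ℝ (Fin d) → EuclideanSpace ℝ (Fin d))
    (C_b : ℝ) (hCb : 0 ≤ C_b)
    (hb : ∀ ς ζ : EuclideanSpace ℝ (Fin d),
      ⟪b ς - b ζ, ς - ζ⟫ ≤ C_b * ‖ς - ζ‖ ^ 2)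
    (x : EuclideanSpace ℝ (Fin d)) (h : ℝ) (hh : 0 < h)
    (yhat yplus : EuclideanSpace ℝ (Fin d))
    (hstep : yplus = yhat + h • b (yplus + x)) :
    ‖yplus‖ - ‖yhat‖ ≤ C_b * h * ‖yplus‖ + h * ‖b x‖ :=
  implicit_euler_one_step_estimate_general b C_b hb x h hh yhat yplus hstep
end

section
/- Let T > 0, p ∈ [1,∞), and let b : ℝ^d → ℝ^d satisfy a one-sided Lipschitz condition with constant C_b. Let x : [0,T] → ℝ^d be continuous, ξ ∈ ℝ^d, and suppose y : [0,T] → ℝ^d is a continuous solution of y(t) = ξ + ∫₀ᵗ b(y(s)) ds + x(t) − x(0) such that M := ‖b ∘ y‖_{p-var;[0,T]} < ∞, i.e. for every finite partition 0 = s_0 < s_1 < … < s_k = T one has Σ_i |b(y(s_{i+1})) − b(y(s_i))|^p ≤ M^p. Let N ∈ ℕ, h = T/N with 2 C_b h ≤ 1, t_n = n h, and let (y_n)_{0 ≤ n ≤ N} satisfy y_0 = ξ and y_{n+1} = y_n + h b(y_{n+1}) + x(t_{n+1}) − x(t_n). Then max_{0 ≤ n ≤ N} |y(t_n) − y_n|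 ≤ 2 T^{1 − 1/p} e^{2 C_b T} M h^{1/p}. -/
open scoped RealInnerProductSpace
open Set Filter Topology MeasureTheory

/-!
The error `eₙ = y(tₙ) - yₙ` satisfies `eₙ₊₁ = eₙ + rₙ + h (b(y(tₙ₊₁)) - b(yₙ₊₁))` with local error
`rₙ = ∫_{tₙ}^{tₙ₊₁} b(y) - h b(y(tₙ₊₁))`. Pairing with `eₙ₊₁` and using the one-sided Lipschitz
bound gives `(1 - C_b h) |eₙ₊₁| ≤ |eₙ| + |rₙ|`, and `(1 - x) e^{2x} ≥ 1` on `[0, 1/2]` turns this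
into `|eₙ| ≤ e^{2 C_b T} ∑ᵢ |rᵢ|`.

The control `V(t) = ‖b ∘ y‖_{p-var;[0,t]} ^ p` satisfies `V(s) + |b(y(t)) - b(y(s))|^p ≤ V(t)`
for `s ≤ t`. Hence `|rₙ| ≤ h (V(tₙ₊₁) - V(tₙ))^{1/p}`, and Hölder's inequality bounds `∑ |rᵢ|` by
`h N^{1-1/p} V(T)^{1/p} = T^{1-1/p} V(T)^{1/p} h^{1/p}`. The same inequality shows that `b ∘ y` is
continuous wherever the monotone function `V` is, so off a countable set; this makes `b ∘ y`
integrable.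
-/

section PVariation

variable {E : Type*} [NormedAddCommGroup E] (φ : ℝ → E) (p : ℝ)

def partitionPowSums (t : ℝ) : Set ℝ :=
  {S | ∃ (k : ℕ) (s : Fin (k + 1) → ℝ), Monotone s ∧ s 0 = 0 ∧ s (Fin.last k) = t ∧
    ∑ i : Fin k, ‖φ (s i.succ) - φ (s i.castSucc)‖ ^ p = S}

/-- `‖φ‖_{p-var;[0,t]} ^ p`; it is `0` when the partition sums are unbounded. -/
noncomputable def pVariationPow (t : ℝ) : ℝ :=
  sSup (partitionPowSums φ p t)

variable {φ p}

theorem zero_mem_partitionPowSums : (0 : ℝ) ∈ partitionPowSums φ p 0 :=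
  ⟨0, fun _ => 0, monotone_const, rfl, rfl, by simp⟩

theorem add_mem_partitionPowSums {S t t' : ℝ} (hS : S ∈ partitionPowSums φ p t) (htt' : t ≤ t') :
    S + ‖φ t' - φ t‖ ^ p ∈ partitionPowSums φ p t' := by
  obtain ⟨k, s, hs, hs0, hst, rfl⟩ := hS
  refine ⟨k + 1, Fin.snoc s t', ?_, ?_, Fin.snoc_last _ _, ?_⟩
  · refine Fin.monotone_iff_le_succ.2 fun i => ?_
    induction i using Fin.lastCases with
    | last => rwa [Fin.succ_last, Fin.snoc_last, Fin.snoc_castSucc, hst]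
    | cast i =>
      rw [Fin.succ_castSucc, Fin.snoc_castSucc, Fin.snoc_castSucc]
      exact hs (Fin.castSucc_le_succ i)
  · rwa [← Fin.castSucc_zero, Fin.snoc_castSucc]
  · rw [Fin.sum_univ_castSucc]
    simp only [Fin.succ_castSucc, Fin.snoc_castSucc, Fin.succ_last, Fin.snoc_last, hst]

theorem pVariationPow_nonneg (t : ℝ) : 0 ≤ pVariationPow φ p t :=
  Real.sSup_nonneg fun _ ⟨_, _, _, _, _, hS⟩ =>
    hS ▸ Finset.sum_nonneg fun _ _ => Real.rpow_nonneg (norm_nonneg _) _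

theorem pVariationPow_rpow_one_div_le {T M : ℝ} (hM : M ^ p ∈ upperBounds (partitionPowSums φ p T))
    (hM0 : 0 ≤ M) (hp : 0 < p) : pVariationPow φ p T ^ (1 / p) ≤ M :=
  calc _ ≤ (M ^ p) ^ (1 / p) := Real.rpow_le_rpow (pVariationPow_nonneg T)
        (Real.sSup_le hM (by positivity)) (by positivity)
    _ = M := by rw [← Real.rpow_mul hM0, mul_one_div_cancel hp.ne', Real.rpow_one]

theorem partitionPowSums_nonempty {t : ℝ} (ht : 0 ≤ t) : (partitionPowSums φ p t).Nonempty :=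
  ⟨_, add_mem_partitionPowSums zero_mem_partitionPowSums ht⟩

variable {T : ℝ} (hT : BddAbove (partitionPowSums φ p T))
include hT

theorem bddAbove_partitionPowSums {t : ℝ} (htT : t ≤ T) : BddAbove (partitionPowSums φ p t) := by
  obtain ⟨K, hK⟩ := hT
  refine ⟨K, fun S hS => ?_⟩
  have := hK (add_mem_partitionPowSums hS htT)
  linarith [Real.rpow_nonneg (norm_nonneg (φ T - φ t)) p]

theorem pVariationPow_add_norm_sub_rpow_le {s t : ℝ} (hs : 0 ≤ s) (hst : s ≤ t) (htT : t ≤ T) :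
    pVariationPow φ p s + ‖φ t - φ s‖ ^ p ≤ pVariationPow φ p t := by
  rw [← le_sub_iff_add_le]
  refine csSup_le (partitionPowSums_nonempty hs) fun S hS => le_sub_iff_add_le.2 ?_
  exact le_csSup (bddAbove_partitionPowSums hT htT) (add_mem_partitionPowSums hS hst)

theorem pVariationPow_mono {s t : ℝ} (hs : 0 ≤ s) (hst : s ≤ t) (htT : t ≤ T) :
    pVariationPow φ p s ≤ pVariationPow φ p t :=
  (le_add_of_nonneg_right (Real.rpow_nonneg (norm_nonneg _) p)).trans
    (pVariationPow_add_norm_sub_rpow_le hT hs hst htT)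

theorem monotoneOn_pVariationPow : MonotoneOn (pVariationPow φ p) (Icc 0 T) :=
  fun _ hs _ ht hst => pVariationPow_mono hT hs.1 hst ht.2

theorem norm_sub_le_pVariationPow_sub_rpow (hp : 0 < p) {s t : ℝ} (hs : 0 ≤ s) (hst : s ≤ t)
    (htT : t ≤ T) :
    ‖φ t - φ s‖ ≤ (pVariationPow φ p t - pVariationPow φ p s) ^ (1 / p) := by
  rw [← Real.rpow_rpow_inv (norm_nonneg (φ t - φ s)) hp.ne', ← one_div]
  gcongr
  linarith [pVariationPow_add_norm_sub_rpow_le hT hs hst htT]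

theorem norm_sub_le_abs_pVariationPow_sub_rpow (hp : 0 < p) {s t : ℝ} (hs : s ∈ Icc 0 T)
    (ht : t ∈ Icc 0 T) :
    ‖φ t - φ s‖ ≤ |pVariationPow φ p t - pVariationPow φ p s| ^ (1 / p) := by
  rcases le_total s t with hst | hts
  · exact (norm_sub_le_pVariationPow_sub_rpow hT hp hs.1 hst ht.2).trans_eq <| by
      rw [abs_of_nonneg (sub_nonneg.2 (monotoneOn_pVariationPow hT hs ht hst))]
  · rw [norm_sub_rev, abs_sub_comm]
    exact (norm_sub_le_pVariationPow_sub_rpow hT hp ht.1 hts hs.2).trans_eq <| by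
      rw [abs_of_nonneg (sub_nonneg.2 (monotoneOn_pVariationPow hT ht hs hts))]

theorem continuousWithinAt_of_continuousWithinAt_pVariationPow (hp : 0 < p) {x : ℝ}
    (hx : x ∈ Icc 0 T) (hV : ContinuousWithinAt (pVariationPow φ p) (Icc 0 T) x) :
    ContinuousWithinAt φ (Icc 0 T) x := by
  rw [ContinuousWithinAt, tendsto_iff_norm_sub_tendsto_zero]
  have hlim := ((hV.sub_const (pVariationPow φ p x)).abs).rpow_const (p := 1 / p)
    (Or.inr (by positivity))
  simp only [sub_self, abs_zero, Real.zero_rpow (one_div_pos.2 hp).ne'] at hlim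
  exact squeeze_zero' (Eventually.of_forall fun _ => norm_nonneg _)
    (eventually_nhdsWithin_of_forall fun y hy =>
      norm_sub_le_abs_pVariationPow_sub_rpow hT hp hx hy) hlim

theorem integrableOn_Icc_of_bddAbove_partitionPowSums (hp : 0 < p) :
    IntegrableOn φ (Icc 0 T) := by
  set D := {x ∈ Icc 0 T | ¬ContinuousWithinAt (pVariationPow φ p) (Icc 0 T) x}
  have hD : D.Countable := (monotoneOn_pVariationPow hT).countable_not_continuousWithinAt
  have hcont : ContinuousOn φ (Icc 0 T \ D) := fun x hx =>
    (continuousWithinAt_of_continuousWithinAt_pVariationPow hT hp hx.1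
      (not_not.1 fun h => hx.2 ⟨hx.1, h⟩)).mono sdiff_subset
  have hmeas : AEStronglyMeasurable φ (volume.restrict (Icc 0 T)) := by
    rw [← Measure.restrict_congr_set (sdiff_null_ae_eq_self (hD.measure_zero volume))]
    exact hcont.aestronglyMeasurable (measurableSet_Icc.diff hD.measurableSet)
  refine ⟨hmeas, .restrict_of_bounded (‖φ 0‖ + (pVariationPow φ p T) ^ (1 / p))
    measure_Icc_lt_top ((ae_restrict_iff' measurableSet_Icc).2 (.of_forall fun t ht => ?_))⟩
  have hV0 := pVariationPow_nonneg (φ := φ) (p := p) 0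
  have hV0t := pVariationPow_mono hT le_rfl ht.1 ht.2
  have hVtT := pVariationPow_mono hT ht.1 ht.2 le_rfl
  calc ‖φ t‖ ≤ ‖φ 0‖ + ‖φ t - φ 0‖ := norm_le_norm_add_norm_sub' _ _
    _ ≤ ‖φ 0‖ + (pVariationPow φ p t - pVariationPow φ p 0) ^ (1 / p) := by
      gcongr
      exact norm_sub_le_pVariationPow_sub_rpow hT hp le_rfl ht.1 ht.2
    _ ≤ ‖φ 0‖ + (pVariationPow φ p T) ^ (1 / p) := by gcongr; linarith

theorem norm_integral_sub_smul_le [NormedSpace ℝ E] [CompleteSpace E] (hp : 0 < p) {a c : ℝ}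
    (ha : 0 ≤ a) (hac : a ≤ c) (hcT : c ≤ T) :
    ‖(∫ s in a..c, φ s) - (c - a) • φ c‖ ≤
      (c - a) * (pVariationPow φ p c - pVariationPow φ p a) ^ (1 / p) := by
  have hint : IntervalIntegrable φ volume a c :=
    ((integrableOn_Icc_of_bddAbove_partitionPowSums hT hp).mono_set
      (uIcc_subset_Icc ⟨ha, hac.trans hcT⟩ ⟨ha.trans hac, hcT⟩)).intervalIntegrable
  rw [← intervalIntegral.integral_const,
    ← intervalIntegral.integral_sub hint intervalIntegrable_const]
  refine (intervalIntegral.norm_integral_le_of_norm_le_const fun s hs => ?_).trans_eq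
    (by rw [abs_of_nonneg (sub_nonneg.2 hac), mul_comm])
  rw [uIoc_of_le hac] at hs
  rw [norm_sub_rev]
  refine (norm_sub_le_pVariationPow_sub_rpow hT hp (ha.trans hs.1.le) hs.2 hcT).trans ?_
  have has := pVariationPow_mono hT ha hs.1.le (hs.2.trans hcT)
  have hsc := pVariationPow_mono hT (ha.trans hs.1.le) hs.2 hcT
  gcongr

end PVariation

theorem sum_rpow_one_div_le_card_rpow_mul_rpow_sum {ι : Type*} (s : Finset ι) {a : ι → ℝ}
    (ha : ∀ i ∈ s, 0 ≤ a i) {p : ℝ} (hp : 1 ≤ p) :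
    ∑ i ∈ s, a i ^ (1 / p) ≤ (s.card : ℝ) ^ (1 - 1 / p) * (∑ i ∈ s, a i) ^ (1 / p) := by
  have hp0 : 0 < p := by linarith
  have hsum : ∑ i ∈ s, (a i ^ (1 / p)) ^ p = ∑ i ∈ s, a i :=
    Finset.sum_congr rfl fun i hi => by
      rw [← Real.rpow_mul (ha i hi), one_div_mul_cancel hp0.ne', Real.rpow_one]
  have key := Real.rpow_sum_le_const_mul_sum_rpow_of_nonneg s hp
    (f := fun i => a i ^ (1 / p)) fun i hi => Real.rpow_nonneg (ha i hi) _
  rw [hsum] at key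
  have hS : 0 ≤ ∑ i ∈ s, a i ^ (1 / p) :=
    Finset.sum_nonneg fun i hi => Real.rpow_nonneg (ha i hi) _
  calc ∑ i ∈ s, a i ^ (1 / p) = ((∑ i ∈ s, a i ^ (1 / p)) ^ p) ^ (1 / p) := by
        rw [← Real.rpow_mul hS, mul_one_div_cancel hp0.ne', Real.rpow_one]
    _ ≤ ((s.card : ℝ) ^ (p - 1) * ∑ i ∈ s, a i) ^ (1 / p) := by gcongr
    _ = (s.card : ℝ) ^ (1 - 1 / p) * (∑ i ∈ s, a i) ^ (1 / p) := by
        rw [Real.mul_rpow (by positivity) (Finset.sum_nonneg ha), ← Real.rpow_mul (by positivity)]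
        congr 2
        field_simp

theorem sum_norm_integral_sub_smul_le {E : Type*} [NormedAddCommGroup E] [NormedSpace ℝ E]
    [CompleteSpace E] {φ : ℝ → E} {p T : ℝ} (hT : BddAbove (partitionPowSums φ p T))
    (hp : 1 ≤ p) {N : ℕ} {h : ℝ} (hh : 0 < h) (hNh : N * h = T) :
    ∑ i ∈ Finset.range N, ‖(∫ s in i * h..(i + 1) * h, φ s) - h • φ ((i + 1) * h)‖ ≤
      T ^ (1 - 1 / p) * pVariationPow φ p T ^ (1 / p) * h ^ (1 / p) := by
  set V := pVariationPow φ p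
  have hp0 : 0 < p := by linarith
  have hgrid : ∀ n ≤ N, (n : ℝ) * h ≤ T := fun n hn => hNh ▸ by gcongr
  have hΔV : ∀ i ∈ Finset.range N, 0 ≤ V ((i + 1) * h) - V (i * h) := fun i hi => by
    have hi : i + 1 ≤ N := Finset.mem_range.1 hi
    exact sub_nonneg.2 <| pVariationPow_mono hT (by positivity) (by linarith)
      (by simpa using hgrid _ hi)
  have hscale : h * (N : ℝ) ^ (1 - 1 / p) = T ^ (1 - 1 / p) * h ^ (1 / p) := by
    rw [← hNh, Real.mul_rpow (by positivity) hh.le, mul_assoc, ← Real.rpow_add hh, sub_add_cancel,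
      Real.rpow_one, mul_comm]
  calc ∑ i ∈ Finset.range N, ‖(∫ s in i * h..(i + 1) * h, φ s) - h • φ ((i + 1) * h)‖
      ≤ ∑ i ∈ Finset.range N, h * (V ((i + 1) * h) - V (i * h)) ^ (1 / p) := by
        refine Finset.sum_le_sum fun i hi => ?_
        have hi : i + 1 ≤ N := Finset.mem_range.1 hi
        have := norm_integral_sub_smul_le hT hp0 (a := i * h) (c := (i + 1) * h) (by positivity)
          (by linarith) (by simpa using hgrid _ hi)
        simpa [add_mul, add_sub_cancel_left] using this
    _ = h * ∑ i ∈ Finset.range N, (V ((i + 1) * h) - V (i * h)) ^ (1 / p) := by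
        rw [Finset.mul_sum]
    _ ≤ h * ((N : ℝ) ^ (1 - 1 / p) * (V T - V 0) ^ (1 / p)) := by
        gcongr
        refine (sum_rpow_one_div_le_card_rpow_mul_rpow_sum _ hΔV hp).trans_eq ?_
        rw [Finset.card_range]
        congr 2
        have := Finset.sum_range_sub (fun i : ℕ => V (i * h)) N
        push_cast at this
        rw [this, hNh, zero_mul]
    _ ≤ h * ((N : ℝ) ^ (1 - 1 / p) * V T ^ (1 / p)) := by
        have := pVariationPow_mono hT le_rfl (hNh ▸ by positivity) le_rfl
        gcongr
        linarith [(pVariationPow_nonneg 0 : 0 ≤ V 0)]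
    _ = T ^ (1 - 1 / p) * V T ^ (1 / p) * h ^ (1 / p) := by
        rw [← mul_assoc, hscale]
        ring

theorem eq_add_intervalIntegral_add_sub {E : Type*} [NormedAddCommGroup E] [NormedSpace ℝ E]
    {f y x : ℝ → E} {ξ : E} {T : ℝ} (hf : IntegrableOn f (Icc 0 T))
    (hy : ∀ t ∈ Icc 0 T, y t = ξ + (∫ s in (0 : ℝ)..t, f s) + x t - x 0) {s t : ℝ}
    (hs : s ∈ Icc 0 T) (ht : t ∈ Icc 0 T) :
    y t = y s + (∫ u in s..t, f u) + (x t - x s) := by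
  have hint : ∀ a ∈ Icc 0 T, ∀ b ∈ Icc 0 T, IntervalIntegrable f volume a b := fun a ha b hb =>
    (hf.mono_set (uIcc_subset_Icc ha hb)).intervalIntegrable
  rw [hy t ht, hy s hs, ← intervalIntegral.integral_add_adjacent_intervals
    (hint 0 ⟨le_rfl, hs.1.trans hs.2⟩ s hs) (hint s hs t ht)]
  abel

theorem one_le_one_sub_mul_exp_two_mul {x : ℝ} (hx : 0 ≤ x) (hx' : 2 * x ≤ 1) :
    1 ≤ (1 - x) * Real.exp (2 * x) := by
  nlinarith [Real.add_one_le_exp (2 * x)]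

section ImplicitEuler

variable {F : Type*} [NormedAddCommGroup F] [InnerProductSpace ℝ F] {b : F → F} {C h : ℝ}
  (hb : ∀ u v, ⟪b u - b v, u - v⟫ ≤ C * ‖u - v‖ ^ 2) (hC : 0 ≤ C) (hh : 0 ≤ h)
  (hCh : 2 * C * h ≤ 1)
include hb hC hh hCh

theorem norm_sub_le_exp_mul_of_sub_eq_add_smul {u v w : F}
    (huv : u - v = w + h • (b u - b v)) : ‖u - v‖ ≤ Real.exp (2 * C * h) * ‖w‖ := by
  have hsq : ‖u - v‖ ^ 2 ≤ ‖u - v‖ * ‖w‖ + C * h * ‖u - v‖ ^ 2 :=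
    calc ‖u - v‖ ^ 2 = ⟪u - v, w⟫ + h * ⟪b u - b v, u - v⟫ := by
          rw [← real_inner_self_eq_norm_sq]
          nth_rw 2 [huv]
          rw [inner_add_right, real_inner_smul_right, real_inner_comm (b u - b v)]
      _ ≤ ‖u - v‖ * ‖w‖ + h * (C * ‖u - v‖ ^ 2) := by
          gcongr
          · exact real_inner_le_norm _ _
          · exact hb u v
      _ = ‖u - v‖ * ‖w‖ + C * h * ‖u - v‖ ^ 2 := by ring
  have hlin : (1 - C * h) * ‖u - v‖ ≤ ‖w‖ := by
    rcases (norm_nonneg (u - v)).eq_or_lt with h0 | hpos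
    · rw [← h0, mul_zero]
      exact norm_nonneg w
    · nlinarith
  calc ‖u - v‖ ≤ ((1 - C * h) * Real.exp (2 * (C * h))) * ‖u - v‖ :=
        le_mul_of_one_le_left (norm_nonneg _)
          (one_le_one_sub_mul_exp_two_mul (by positivity) (by linarith))
    _ = Real.exp (2 * C * h) * ((1 - C * h) * ‖u - v‖) := by ring_nf
    _ ≤ Real.exp (2 * C * h) * ‖w‖ := by gcongr

theorem norm_sub_le_exp_pow_mul_sum_of_sub_eq_add_smul {N : ℕ} {z z' r : ℕ → F}
    (h0 : z 0 = z' 0)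
    (hstep : ∀ n < N,
      z (n + 1) - z' (n + 1) = (z n - z' n + r n) + h • (b (z (n + 1)) - b (z' (n + 1)))) :
    ∀ n ≤ N, ‖z n - z' n‖ ≤ Real.exp (2 * C * h) ^ n * ∑ i ∈ Finset.range n, ‖r i‖ := by
  intro n hn
  induction n with
  | zero => simp [h0]
  | succ n ih =>
    have hK : 1 ≤ Real.exp (2 * C * h) ^ n := one_le_pow₀ (Real.one_le_exp (by positivity))
    calc ‖z (n + 1) - z' (n + 1)‖ ≤ Real.exp (2 * C * h) * ‖z n - z' n + r n‖ :=
          norm_sub_le_exp_mul_of_sub_eq_add_smul hb hC hh hCh (hstep n hn)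
      _ ≤ Real.exp (2 * C * h) * (Real.exp (2 * C * h) ^ n * ∑ i ∈ Finset.range n, ‖r i‖ +
            Real.exp (2 * C * h) ^ n * ‖r n‖) := by
          gcongr
          exact (norm_add_le _ _).trans
            (add_le_add (ih (by omega)) (le_mul_of_one_le_left (norm_nonneg _) hK))
      _ = Real.exp (2 * C * h) ^ (n + 1) * ∑ i ∈ Finset.range (n + 1), ‖r i‖ := by
          rw [Finset.sum_range_succ, pow_succ]
          ring

end ImplicitEuler

theorem implicit_euler_rate_p_variation_general {d : ℕ} (T : ℝ) (hT : 0 < T)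
    (p : ℝ) (hp : 1 ≤ p)
    (b : EuclideanSpace ℝ (Fin d) → EuclideanSpace ℝ (Fin d))
    (C_b : ℝ) (hCb : 0 ≤ C_b)
    (hb : ∀ ς ζ : EuclideanSpace ℝ (Fin d),
      ⟪b ς - b ζ, ς - ζ⟫ ≤ C_b * ‖ς - ζ‖ ^ 2)
    (x : ℝ → EuclideanSpace ℝ (Fin d))
    (ξ : EuclideanSpace ℝ (Fin d))
    (y : ℝ → EuclideanSpace ℝ (Fin d))
    (hy_sol : ∀ t ∈ Set.Icc (0 : ℝ) T,
      y t = ξ + (∫ s in (0 : ℝ)..t, b (y s)) + x t - x 0)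
    (M : ℝ) (hM0 : 0 ≤ M)
    (hM : ∀ (k : ℕ) (s : Fin (k + 1) → ℝ), Monotone s → s 0 = 0 →
      s (Fin.last k) = T →
      ∑ i : Fin k, ‖b (y (s i.succ)) - b (y (s i.castSucc))‖ ^ p ≤ M ^ p)
    (N : ℕ) (hN : 1 ≤ N) (h : ℝ) (hh : h = T / N) (hCh : 2 * C_b * h ≤ 1)
    (yd : ℕ → EuclideanSpace ℝ (Fin d)) (hyd0 : yd 0 = ξ)
    (hstep : ∀ n < N,
      yd (n + 1) = yd n + h • b (yd (n + 1)) + x ((n + 1) * h) - x (n * h)) :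
    ∀ n ≤ N, ‖y (n * h) - yd n‖ ≤
      2 * T ^ (1 - 1 / p) * Real.exp (2 * C_b * T) * M * h ^ (1 / p) := by
  have hh0 : 0 < h := hh ▸ div_pos hT (by exact_mod_cast hN)
  have hNh : (N : ℝ) * h = T := by rw [hh]; field_simp
  have hgrid : ∀ n ≤ N, (n : ℝ) * h ∈ Icc 0 T := fun n hn => ⟨by positivity, hNh ▸ by gcongr⟩
  have hMp : M ^ p ∈ upperBounds (partitionPowSums (fun s => b (y s)) p T) := by
    rintro _ ⟨k, s, hs, hs0, hsT, rfl⟩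
    exact hM k s hs hs0 hsT
  set r : ℕ → EuclideanSpace ℝ (Fin d) :=
    fun i => (∫ s in i * h..(i + 1) * h, b (y s)) - h • b (y ((i + 1) * h))
  have hrec : ∀ n < N, y ((n + 1 : ℕ) * h) - yd (n + 1) =
      (y (n * h) - yd n + r n) + h • (b (y ((n + 1 : ℕ) * h)) - b (yd (n + 1))) := fun n hn => by
    have := eq_add_intervalIntegral_add_sub
      (integrableOn_Icc_of_bddAbove_partitionPowSums ⟨_, hMp⟩ (by positivity)) hy_sol
      (hgrid n hn.le) (hgrid (n + 1) hn)
    push_cast at this ⊢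
    linear_combination (norm := module) this - hstep n hn
  have hr : ∑ i ∈ Finset.range N, ‖r i‖ ≤ T ^ (1 - 1 / p) * M * h ^ (1 / p) := by
    refine (sum_norm_integral_sub_smul_le ⟨_, hMp⟩ hp hh0 hNh).trans ?_
    gcongr
    exact pVariationPow_rpow_one_div_le hMp hM0 (by positivity)
  intro n hn
  calc ‖y (n * h) - yd n‖ ≤ Real.exp (2 * C_b * h) ^ n * ∑ i ∈ Finset.range n, ‖r i‖ :=
        norm_sub_le_exp_pow_mul_sum_of_sub_eq_add_smul hb hCb hh0.le hCh (z := fun n => y (n * h))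
          (by simp [hyd0, hy_sol 0 ⟨le_rfl, hT.le⟩]) hrec n hn
    _ ≤ Real.exp (2 * C_b * T) * (T ^ (1 - 1 / p) * M * h ^ (1 / p)) := by
      gcongr
      · rw [← Real.exp_nat_mul, Real.exp_le_exp, ← hNh]
        have := mul_le_mul_of_nonneg_right (Nat.cast_le.2 hn : (n : ℝ) ≤ N)
          (by positivity : 0 ≤ 2 * C_b * h)
        linarith
      · exact (Finset.sum_le_sum_of_subset_of_nonneg (Finset.range_subset_range.2 hn)
          fun _ _ _ => norm_nonneg _).trans hr
    _ ≤ 2 * T ^ (1 - 1 / p) * Real.exp (2 * C_b * T) * M * h ^ (1 / p) := by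
      have : 0 ≤ Real.exp (2 * C_b * T) * (T ^ (1 - 1 / p) * M * h ^ (1 / p)) := by positivity
      linarith

/-- Convergence of the implicit Euler scheme, `p`-variation case: if the exact
solution satisfies `‖b ∘ y‖_{p-var;[0,T]} ≤ M`, then
`max_n ‖y(t_n) - y_n‖ ≤ 2 T^{1-1/p} e^{2 C_b T} M h^{1/p}`. -/
theorem implicit_euler_rate_p_variation {d : ℕ} (T : ℝ) (hT : 0 < T)
    (p : ℝ) (hp : 1 ≤ p)
    (b : EuclideanSpace ℝ (Fin d) → EuclideanSpace ℝ (Fin d))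
    (C_b : ℝ) (hCb : 0 ≤ C_b)
    (hb : ∀ ς ζ : EuclideanSpace ℝ (Fin d),
      ⟪b ς - b ζ, ς - ζ⟫ ≤ C_b * ‖ς - ζ‖ ^ 2)
    (x : ℝ → EuclideanSpace ℝ (Fin d)) (hx : ContinuousOn x (Set.Icc 0 T))
    (ξ : EuclideanSpace ℝ (Fin d))
    (y : ℝ → EuclideanSpace ℝ (Fin d)) (hy_cont : ContinuousOn y (Set.Icc 0 T))
    (hy_sol : ∀ t ∈ Set.Icc (0 : ℝ) T,
      y t = ξ + (∫ s in (0 : ℝ)..t, b (y s)) + x t - x 0)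
    (M : ℝ) (hM0 : 0 ≤ M)
    (hM : ∀ (k : ℕ) (s : Fin (k + 1) → ℝ), Monotone s → s 0 = 0 →
      s (Fin.last k) = T →
      ∑ i : Fin k, ‖b (y (s i.succ)) - b (y (s i.castSucc))‖ ^ p ≤ M ^ p)
    (N : ℕ) (hN : 1 ≤ N) (h : ℝ) (hh : h = T / N) (hCh : 2 * C_b * h ≤ 1)
    (yd : ℕ → EuclideanSpace ℝ (Fin d)) (hyd0 : yd 0 = ξ)
    (hstep : ∀ n < N,
      yd (n + 1) = yd n + h • b (yd (n + 1)) + x ((n + 1) * h) - x (n * h)) :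
    ∀ n ≤ N, ‖y (n * h) - yd n‖ ≤
      2 * T ^ (1 - 1 / p) * Real.exp (2 * C_b * T) * M * h ^ (1 / p) :=
  implicit_euler_rate_p_variation_general T hT p hp b C_b hCb hb x ξ y hy_sol M hM0 hM N hN h hh hCh
    yd hyd0 hstep
end

section
/- Let T > 0, p ∈ [1,∞), and let b : ℝ^d → ℝ^d satisfy a one-sided Lipschitz condition with constant C_b and be locally Lipschitz continuous with modulus Υ_b. Let x : [0,T] → ℝ^d be (1/p)-Hölder continuous, ξ ∈ ℝ^d, and let y : [0,T] → ℝ^d be the unique continuous solution of y(t) = ξ + ∫₀ᵗ b(y(s)) ds + x(t) − x(0). Let N ∈ ℕ, h = T/N with 2 C_b h ≤ 1, t_n = n h, and let (y_n)_{0 ≤ n ≤ N} satisfy y_0 = ξ and y_{n+1} = y_n + h b(y_{n+1}) + x(t_{n+1}) − x(t_n). Then max_{0 ≤ n ≤ N} |y(t_n) − y_n| ≤ 2 T e^{2 C_b T} Υ_b(‖y‖_{∞;[0,T]}) ‖y‖_{1/p;[0,T]} h^{1/p}, where ‖y‖_{∞;[0,T]} = sup_t |y(t)| and ‖y‖_{1/p;[0,T]}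 is the (1/p)-Hölder constant of y. -/
/-!
With `e_n = y(t_n) - y_n`, subtracting the scheme from the integral equation on `[t_n, t_{n+1}]`
gives `e_{n+1} = e_n + h (b(y(t_{n+1})) - b(y_{n+1})) + δ_n`, where
`δ_n = ∫_{t_n}^{t_{n+1}} (b(y(s)) - b(y(t_{n+1}))) ds`. Taking the inner product with `e_{n+1}` and
using the one-sided Lipschitz condition gives `(1 - C_b h) |e_{n+1}| ≤ |e_n| + |δ_n|`, while local
Lipschitz continuity of `b` along the bounded path `y` and the Hölder continuity of `y` give
`|δ_n| ≤ h Υ_b(‖y‖_∞) ‖y‖_{1/p} h^{1/p}`. A discrete Gronwall argument, together with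
`(1 - C_b h)⁻¹ ≤ e^{2 C_b h}` for `C_b h ≤ 1/2`, sums these local errors.
-/

open scoped RealInnerProductSpace

open Set Real

theorem continuousOn_of_norm_sub_le_mul_rpow {E : Type*} [SeminormedAddCommGroup E]
    {f : ℝ → E} {s : Set ℝ} {K r : ℝ} (hr : 0 < r)
    (hf : ∀ u ∈ s, ∀ v ∈ s, ‖f v - f u‖ ≤ K * |v - u| ^ r) : ContinuousOn f s := by
  intro t ht
  rw [ContinuousWithinAt, tendsto_iff_norm_sub_tendsto_zero]
  have hlim : Filter.Tendsto (fun v => K * |v - t| ^ r) (nhdsWithin t s) (nhds 0) := by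
    have : Continuous fun v : ℝ => K * |v - t| ^ r := by fun_prop (disch := positivity)
    simpa [hr.ne'] using (this.tendsto t).mono_left nhdsWithin_le_nhds
  exact squeeze_zero' (Filter.Eventually.of_forall fun _ => norm_nonneg _)
    (eventually_nhdsWithin_of_forall fun v hv => hf t ht v hv) hlim

theorem inv_one_sub_pow_le_exp {c : ℝ} (hc0 : 0 ≤ c) (hc : c ≤ 1 / 2) (n : ℕ) :
    (1 - c)⁻¹ ^ n ≤ exp (2 * c * n) := by
  have hstep : (1 - c)⁻¹ ≤ exp (2 * c) := by
    rw [inv_le_iff_one_le_mul₀' (by linarith)]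
    nlinarith [add_one_le_exp (2 * c)]
  calc (1 - c)⁻¹ ^ n ≤ exp (2 * c) ^ n := pow_le_pow_left₀ (by bound) hstep n
    _ = exp (2 * c * n) := by rw [← exp_nat_mul, mul_comm]

theorem nat_mul_inv_one_sub_pow_le {C h : ℝ} {n N : ℕ} (hC : 0 ≤ C) (hh : 0 ≤ h)
    (hCh : 2 * C * h ≤ 1) (hn : n ≤ N) :
    n * (1 - C * h)⁻¹ ^ n ≤ N * exp (2 * C * (N * h)) := by
  have hnN : (n : ℝ) ≤ N := Nat.cast_le.2 hn
  have hpow : (1 - C * h)⁻¹ ^ n ≤ exp (2 * C * (N * h)) :=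
    calc (1 - C * h)⁻¹ ^ n ≤ exp (2 * (C * h) * n) :=
          inv_one_sub_pow_le_exp (by positivity) (by linarith) n
      _ ≤ exp (2 * C * (N * h)) := by
          rw [exp_le_exp]
          nlinarith [mul_le_mul_of_nonneg_left hnN (by positivity : 0 ≤ C * h)]
  have : 0 ≤ (1 - C * h)⁻¹ ^ n := pow_nonneg (inv_nonneg.2 (by linarith)) n
  gcongr

theorem norm_comp_sub_le_of_lipschitzOn_of_holder {E F : Type*} [SeminormedAddCommGroup E]
    [SeminormedAddCommGroup F] {f : ℝ → E} {g : E → F} {s : Set ℝ} {S : Set E}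
    {Λ K r h : ℝ} (hr : 0 ≤ r) (hΛ : 0 ≤ Λ) (hK : 0 ≤ K)
    (hg : ∀ a ∈ S, ∀ a' ∈ S, ‖g a - g a'‖ ≤ Λ * ‖a - a'‖) (hfS : MapsTo f s S)
    (hf : ∀ u ∈ s, ∀ v ∈ s, ‖f v - f u‖ ≤ K * |v - u| ^ r) :
    ∀ u ∈ s, ∀ v ∈ s, |v - u| ≤ h → ‖g (f u) - g (f v)‖ ≤ Λ * (K * h ^ r) :=
  fun u hu v hv huv =>
    calc ‖g (f u) - g (f v)‖ ≤ Λ * ‖f u - f v‖ := hg _ (hfS hu) _ (hfS hv)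
      _ ≤ Λ * (K * |u - v| ^ r) := by gcongr; exact hf v hv u hu
      _ ≤ Λ * (K * h ^ r) := by rw [abs_sub_comm] at huv; gcongr

theorem le_nat_mul_pow_mul_of_le_mul_add {e : ℕ → ℝ} {a D : ℝ} {N : ℕ} (ha : 1 ≤ a)
    (hD : 0 ≤ D) (he0 : e 0 ≤ 0) (he : ∀ n < N, e (n + 1) ≤ a * (e n + D)) :
    ∀ n ≤ N, e n ≤ n * a ^ n * D := by
  intro n hn
  induction n with
  | zero => simpa using he0
  | succ k ih =>
    have hak : a ≤ a ^ (k + 1) := le_self_pow₀ ha (by omega)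
    calc e (k + 1) ≤ a * (e k + D) := he k hn
      _ ≤ a * (k * a ^ k * D + D) := by gcongr; exact ih (by omega)
      _ = k * a ^ (k + 1) * D + a * D := by ring
      _ ≤ (k + 1 : ℕ) * a ^ (k + 1) * D := by push_cast; nlinarith

theorem one_sub_mul_norm_le_of_inner_le {E : Type*} [NormedAddCommGroup E]
    [InnerProductSpace ℝ E] {u v w δ : E} {h C : ℝ} (hh : 0 ≤ h) (hu : u = v + h • w + δ)
    (hw : ⟪w, u⟫ ≤ C * ‖u‖ ^ 2) : (1 - C * h) * ‖u‖ ≤ ‖v‖ + ‖δ‖ := by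
  have hsq : ‖u‖ ^ 2 ≤ (‖v‖ + ‖δ‖) * ‖u‖ + C * h * ‖u‖ ^ 2 := by
    have hexp : ‖u‖ ^ 2 = ⟪v, u⟫ + h * ⟪w, u⟫ + ⟪δ, u⟫ := by
      rw [← real_inner_self_eq_norm_sq]
      nth_rewrite 1 [hu]
      rw [inner_add_left, inner_add_left, real_inner_smul_left]
    nlinarith [real_inner_le_norm v u, real_inner_le_norm δ u, mul_le_mul_of_nonneg_left hw hh]
  rcases (norm_nonneg u).eq_or_lt with hu0 | hu0
  · rw [← hu0, mul_zero]
    positivity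
  · nlinarith

theorem sub_eq_integral_add_sub {E : Type*} [NormedAddCommGroup E] [NormedSpace ℝ E]
    {b : E → E} {x y : ℝ → E} {ξ : E} {T : ℝ}
    (hsol : ∀ t ∈ Icc 0 T, y t = ξ + (∫ s in (0 : ℝ)..t, b (y s)) + x t - x 0)
    (hby : ContinuousOn (fun s => b (y s)) (Icc 0 T)) {s t : ℝ} (hs : s ∈ Icc 0 T)
    (ht : t ∈ Icc 0 T) :
    y t - y s = (∫ r in s..t, b (y r)) + (x t - x s) := by
  have h0 : (0 : ℝ) ∈ Icc 0 T := ⟨le_rfl, hs.1.trans hs.2⟩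
  have hint : ∀ u ∈ Icc 0 T, ∀ v ∈ Icc 0 T,
      IntervalIntegrable (fun r => b (y r)) MeasureTheory.volume u v := fun u hu v hv =>
    (hby.mono (uIcc_subset_Icc hu hv)).intervalIntegrable
  rw [hsol t ht, hsol s hs,
    ← intervalIntegral.integral_add_adjacent_intervals (hint 0 h0 s hs) (hint s hs t ht)]
  abel

section ImplicitEuler

variable {E : Type*} [NormedAddCommGroup E] [InnerProductSpace ℝ E] [CompleteSpace E]
  {b : E → E} {x y : ℝ → E} {ξ : E} {T : ℝ}

theorem implicit_euler_step_error
    (hsol : ∀ t ∈ Icc 0 T, y t = ξ + (∫ s in (0 : ℝ)..t, b (y s)) + x t - x 0)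
    (hby : ContinuousOn (fun s => b (y s)) (Icc 0 T)) {C h L t : ℝ} {z z' : E}
    (hosl : ∀ ς ζ : E, ⟪b ς - b ζ, ς - ζ⟫ ≤ C * ‖ς - ζ‖ ^ 2) (hh : 0 ≤ h)
    (ht : t ∈ Icc 0 T) (hth : t + h ∈ Icc 0 T)
    (hL : ∀ s ∈ Icc t (t + h), ‖b (y s) - b (y (t + h))‖ ≤ L)
    (hz' : z' = z + h • b z' + x (t + h) - x t) :
    (1 - C * h) * ‖y (t + h) - z'‖ ≤ ‖y t - z‖ + h * L := by
  set δ := ∫ s in t..t + h, (b (y s) - b (y (t + h))) with hδdef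
  have hδ : ‖δ‖ ≤ h * L := by
    have := intervalIntegral.norm_integral_le_of_norm_le_const (a := t) (b := t + h)
      (f := fun s => b (y s) - b (y (t + h))) (C := L) fun s hs => by
        rw [uIoc_of_le (by linarith)] at hs
        exact hL s (Ioc_subset_Icc_self hs)
    simpa [abs_of_nonneg hh, mul_comm] using this
  have hint : IntervalIntegrable (fun s => b (y s)) MeasureTheory.volume t (t + h) :=
    (hby.mono (uIcc_subset_Icc ht hth)).intervalIntegrable
  have hδ' : (∫ s in t..t + h, b (y s)) = δ + h • b (y (t + h)) := by
    rw [hδdef, intervalIntegral.integral_sub hint intervalIntegrable_const,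
      intervalIntegral.integral_const, add_sub_cancel_left, sub_add_cancel]
  have hz : z' - z = h • b z' + (x (t + h) - x t) := by
    conv_lhs => rw [hz']
    abel
  have hsplit : y (t + h) - z' = (y t - z) + h • (b (y (t + h)) - b z') + δ := by
    calc y (t + h) - z' = (y (t + h) - y t) - (z' - z) + (y t - z) := by abel
      _ = _ := by rw [sub_eq_integral_add_sub hsol hby ht hth, hz, hδ', smul_sub]; abel
  exact (one_sub_mul_norm_le_of_inner_le hh hsplit (hosl _ _)).trans (by linarith)

theorem implicit_euler_error_le
    (hsol : ∀ t ∈ Icc 0 T, y t = ξ + (∫ s in (0 : ℝ)..t, b (y s)) + x t - x 0)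
    (hby : ContinuousOn (fun s => b (y s)) (Icc 0 T)) {C h L : ℝ} {N : ℕ}
    (hosl : ∀ ς ζ : E, ⟪b ς - b ζ, ς - ζ⟫ ≤ C * ‖ς - ζ‖ ^ 2) (hC : 0 ≤ C) (hh : 0 ≤ h)
    (hCh : C * h < 1) (hNT : N * h ≤ T)
    (hL : ∀ s ∈ Icc 0 T, ∀ t ∈ Icc 0 T, |t - s| ≤ h → ‖b (y s) - b (y t)‖ ≤ L)
    {z : ℕ → E} (hz0 : z 0 = ξ)
    (hstep : ∀ n < N, z (n + 1) = z n + h • b (z (n + 1)) + x ((n + 1) * h) - x (n * h)) :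
    ∀ n ≤ N, ‖y (n * h) - z n‖ ≤ n * (1 - C * h)⁻¹ ^ n * (h * L) := by
  have hmem : ∀ n ≤ N, (n : ℝ) * h ∈ Icc 0 T := fun n hn =>
    ⟨by positivity, (mul_le_mul_of_nonneg_right (by exact_mod_cast hn) hh).trans hNT⟩
  have h0 : (0 : ℝ) ∈ Icc 0 T := by simpa using hmem 0 (Nat.zero_le N)
  have hy0 : y 0 = ξ := by simpa using hsol 0 h0
  have hL0 : 0 ≤ L := (norm_nonneg _).trans (hL 0 h0 0 h0 (by simpa using hh))
  have ha : 1 ≤ (1 - C * h)⁻¹ := (one_le_inv₀ (by linarith)).mpr (by nlinarith)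
  refine le_nat_mul_pow_mul_of_le_mul_add (e := fun n => ‖y (n * h) - z n‖) ha
    (by positivity) (by simp [hy0, hz0]) fun n hn => ?_
  have hnext : ((n + 1 : ℕ) : ℝ) * h = n * h + h := by push_cast; ring
  have hmem' := hmem (n + 1) hn
  rw [hnext] at hmem' ⊢
  rw [le_inv_mul_iff₀ (by linarith)]
  refine implicit_euler_step_error hsol hby hosl hh (hmem n hn.le) hmem' (fun s hs => ?_) ?_
  · exact hL s ⟨(hmem n hn.le).1.trans hs.1, hs.2.trans hmem'.2⟩ _ hmem'
      (by rw [abs_of_nonneg (by linarith [hs.2])]; linarith [hs.1])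
  · simpa only [add_one_mul] using hstep n hn

end ImplicitEuler

theorem implicit_euler_rate_holder_general {d : ℕ} (T : ℝ) (hT : 0 < T)
    (p : ℝ) (hp : 1 ≤ p)
    (b : EuclideanSpace ℝ (Fin d) → EuclideanSpace ℝ (Fin d))
    (C_b : ℝ) (hCb : 0 ≤ C_b)
    (hb_osl : ∀ ς ζ : EuclideanSpace ℝ (Fin d),
      ⟪b ς - b ζ, ς - ζ⟫ ≤ C_b * ‖ς - ζ‖ ^ 2)
    (Υ : ℝ → ℝ)
    (hΥ_nonneg : ∀ r ∈ Set.Ici (0 : ℝ), 0 ≤ Υ r)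
    (hb_loclip : ∀ r ∈ Set.Ici (0 : ℝ),
      ∀ ς ∈ Metric.closedBall (0 : EuclideanSpace ℝ (Fin d)) r,
      ∀ ζ ∈ Metric.closedBall (0 : EuclideanSpace ℝ (Fin d)) r,
        ‖b ς - b ζ‖ ≤ Υ r * ‖ς - ζ‖)
    (x : ℝ → EuclideanSpace ℝ (Fin d))
    (ξ : EuclideanSpace ℝ (Fin d))
    (y : ℝ → EuclideanSpace ℝ (Fin d))
    (hy_sol : ∀ t ∈ Set.Icc (0 : ℝ) T,
      y t = ξ + (∫ s in (0 : ℝ)..t, b (y s)) + x t - x 0)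
    (M_y : ℝ) (hMy : ∀ t ∈ Set.Icc (0 : ℝ) T, ‖y t‖ ≤ M_y)
    (K_y : ℝ)
    (hy_hold : ∀ s ∈ Set.Icc (0 : ℝ) T, ∀ t ∈ Set.Icc (0 : ℝ) T,
      ‖y t - y s‖ ≤ K_y * |t - s| ^ (1 / p))
    (N : ℕ) (hN : 1 ≤ N) (h : ℝ) (hh : h = T / N) (hCh : 2 * C_b * h ≤ 1)
    (yd : ℕ → EuclideanSpace ℝ (Fin d)) (hyd0 : yd 0 = ξ)
    (hstep : ∀ n < N,
      yd (n + 1) = yd n + h • b (yd (n + 1)) + x ((n + 1) * h) - x (n * h)) :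
    ∀ n ≤ N, ‖y (n * h) - yd n‖ ≤
      2 * T * Real.exp (2 * C_b * T) * Υ M_y * K_y * h ^ (1 / p) := by
  have hp0 : 0 < 1 / p := by positivity
  have hh0 : 0 ≤ h := by rw [hh]; positivity
  have hNh : (N : ℝ) * h = T := by rw [hh]; field_simp
  have hMy0 : 0 ≤ M_y := (norm_nonneg _).trans (hMy 0 ⟨le_rfl, hT.le⟩)
  have hΥ0 : 0 ≤ Υ M_y := hΥ_nonneg M_y hMy0
  have hKy0 : 0 ≤ K_y := by
    have := (norm_nonneg _).trans (hy_hold 0 ⟨le_rfl, hT.le⟩ T ⟨hT.le, le_rfl⟩)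
    exact nonneg_of_mul_nonneg_left this (by rw [sub_zero, abs_of_pos hT]; positivity)
  have hball : MapsTo y (Icc 0 T) (Metric.closedBall 0 M_y) := fun t ht => by
    simpa using hMy t ht
  have hby : ContinuousOn (fun s => b (y s)) (Icc 0 T) := by
    refine (LipschitzOnWith.of_dist_le' (K := Υ M_y) fun ς hς ζ hζ => ?_).continuousOn.comp
      (continuousOn_of_norm_sub_le_mul_rpow hp0 hy_hold) hball
    simpa only [dist_eq_norm] using hb_loclip M_y hMy0 ς hς ζ hζ
  have hL := norm_comp_sub_le_of_lipschitzOn_of_holder (h := h) hp0.le hΥ0 hKy0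
    (hb_loclip M_y hMy0) hball hy_hold
  intro n hn
  calc ‖y (n * h) - yd n‖
      ≤ n * (1 - C_b * h)⁻¹ ^ n * (h * (Υ M_y * (K_y * h ^ (1 / p)))) :=
        implicit_euler_error_le hy_sol hby hb_osl hCb hh0 (by linarith) hNh.le hL hyd0 hstep n hn
    _ ≤ N * exp (2 * C_b * (N * h)) * (h * (Υ M_y * (K_y * h ^ (1 / p)))) :=
        mul_le_mul_of_nonneg_right (nat_mul_inv_one_sub_pow_le hCb hh0 hCh hn) (by positivity)
    _ = T * exp (2 * C_b * T) * Υ M_y * K_y * h ^ (1 / p) := by rw [← hNh]; ring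
    _ ≤ 2 * T * exp (2 * C_b * T) * Υ M_y * K_y * h ^ (1 / p) := by gcongr; linarith

/-- Convergence of the implicit Euler scheme, Hölder case:
`max_n ‖y(t_n) - y_n‖ ≤ 2 T e^{2 C_b T} Υ_b(‖y‖_∞) ‖y‖_{1/p} h^{1/p}`,
where `M_y` bounds `‖y‖_{∞;[0,T]}` and `K_y` bounds the `(1/p)`-Hölder
constant of `y`. -/
theorem implicit_euler_rate_holder {d : ℕ} (T : ℝ) (hT : 0 < T)
    (p : ℝ) (hp : 1 ≤ p)
    (b : EuclideanSpace ℝ (Fin d) → EuclideanSpace ℝ (Fin d))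
    (C_b : ℝ) (hCb : 0 ≤ C_b)
    (hb_osl : ∀ ς ζ : EuclideanSpace ℝ (Fin d),
      ⟪b ς - b ζ, ς - ζ⟫ ≤ C_b * ‖ς - ζ‖ ^ 2)
    (Υ : ℝ → ℝ) (hΥ_mono : MonotoneOn Υ (Set.Ici 0))
    (hΥ_nonneg : ∀ r ∈ Set.Ici (0 : ℝ), 0 ≤ Υ r)
    (hb_loclip : ∀ r ∈ Set.Ici (0 : ℝ),
      ∀ ς ∈ Metric.closedBall (0 : EuclideanSpace ℝ (Fin d)) r,
      ∀ ζ ∈ Metric.closedBall (0 : EuclideanSpace ℝ (Fin d)) r,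
        ‖b ς - b ζ‖ ≤ Υ r * ‖ς - ζ‖)
    (x : ℝ → EuclideanSpace ℝ (Fin d))
    (K_x : ℝ) (hx_hold : ∀ s ∈ Set.Icc (0 : ℝ) T, ∀ t ∈ Set.Icc (0 : ℝ) T,
      ‖x t - x s‖ ≤ K_x * |t - s| ^ (1 / p))
    (ξ : EuclideanSpace ℝ (Fin d))
    (y : ℝ → EuclideanSpace ℝ (Fin d)) (hy_cont : ContinuousOn y (Set.Icc 0 T))
    (hy_sol : ∀ t ∈ Set.Icc (0 : ℝ) T,
      y t = ξ + (∫ s in (0 : ℝ)..t, b (y s)) + x t - x 0)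
    (M_y : ℝ) (hMy0 : 0 ≤ M_y) (hMy : ∀ t ∈ Set.Icc (0 : ℝ) T, ‖y t‖ ≤ M_y)
    (K_y : ℝ) (hKy0 : 0 ≤ K_y)
    (hy_hold : ∀ s ∈ Set.Icc (0 : ℝ) T, ∀ t ∈ Set.Icc (0 : ℝ) T,
      ‖y t - y s‖ ≤ K_y * |t - s| ^ (1 / p))
    (N : ℕ) (hN : 1 ≤ N) (h : ℝ) (hh : h = T / N) (hCh : 2 * C_b * h ≤ 1)
    (yd : ℕ → EuclideanSpace ℝ (Fin d)) (hyd0 : yd 0 = ξ)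
    (hstep : ∀ n < N,
      yd (n + 1) = yd n + h • b (yd (n + 1)) + x ((n + 1) * h) - x (n * h)) :
    ∀ n ≤ N, ‖y (n * h) - yd n‖ ≤
      2 * T * Real.exp (2 * C_b * T) * Υ M_y * K_y * h ^ (1 / p) :=
  implicit_euler_rate_holder_general T hT p hp b C_b hCb hb_osl Υ hΥ_nonneg hb_loclip x ξ y hy_sol
    M_y hMy K_y hy_hold N hN h hh hCh yd hyd0 hstep
end

section
/- Let T > 0 and let x : [0,T] → ℝ^m, 𝕏² : [0,T]² → ℝ^m ⊗ ℝ^m, 𝕏³ : [0,T]² → (ℝ^m)^{⊗3} satisfy the Chen relations: 𝕏²_{s,t} − 𝕏²_{s,u} − 𝕏²_{u,t} = x_{s,u} ⊗ x_{u,t} and 𝕏³_{s,t} − 𝕏³_{s,u} − 𝕏³_{u,t} = 𝕏²_{s,u} ⊗ x_{u,t} + x_{s,u} ⊗ 𝕏²_{u,t} for all s, u, t ∈ [0,T], where x_{s,t} := x(t) − x(s). Let W be a finite-dimensional normed space and let ŷ : [0,T] → L(ℝ^m, W), ŷ⁽¹⁾ : [0,T] → L(ℝ^m ⊗ ℝ^m,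 W), ŷ⁽²⁾ : [0,T] → L((ℝ^m)^{⊗3}, W) be maps, and define the remainders R³_{s,t} := ŷ(t) − ŷ(s) − ŷ⁽¹⁾(s)(x_{s,t} ⊗ ·) − ŷ⁽²⁾(s)(𝕏²_{s,t} ⊗ ·) and R²_{s,t} := ŷ⁽¹⁾(t) − ŷ⁽¹⁾(s) − ŷ⁽²⁾(s)(x_{s,t} ⊗ ·) (viewed via the canonical identifications L(ℝ^m⊗ℝ^m,W) ≅ L(ℝ^m, L(ℝ^m,W)) and L((ℝ^m)^{⊗3},W) ≅ L(ℝ^m, L(ℝ^m⊗ℝ^m,W))). Set J_{s,t} := ŷ(s)x_{s,t} + ŷ⁽¹⁾(s)𝕏²_{s,t} + ŷ⁽²⁾(s)𝕏³_{s,t} ∈ W. Then for all s ≤ u ≤ t in [0,T], J_{s,t} − J_{s,u} − J_{u,t} = −R³_{s,u} x_{u,t} − R²_{s,u} 𝕏²_{u,t} + (ŷ⁽²⁾(s) − ŷ⁽²⁾(u)) 𝕏³_{u,t}. -/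
/-!
Writing `x_{s,t} = x_{s,u} + x_{u,t}` and expanding `𝕏²_{s,t}`, `𝕏³_{s,t}` by Chen's relations,
the cross terms `x_{s,u} ⊗ x_{u,t}`, `𝕏²_{s,u} ⊗ x_{u,t}` and `x_{s,u} ⊗ 𝕏²_{u,t}` they produce are
exactly the Taylor terms subtracted in `R³_{s,u} x_{u,t}` and `R²_{s,u} 𝕏²_{u,t}`; what is left is
the mismatch `(ŷ⁽²⁾(s) - ŷ⁽²⁾(u)) 𝕏³_{u,t}`. The identity is pure multilinear algebra.
-/

open scoped TensorProduct

section ChenCoherence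

variable {R ι V W : Type*} [CommRing R] [AddCommGroup V] [Module R V]
  [AddCommGroup W] [Module R W]

theorem local_approx_sub_sub_eq_of_chen (x : ι → V) (X2 : ι → ι → V ⊗[R] V)
    (X3 : ι → ι → V ⊗[R] (V ⊗[R] V)) (yhat : ι → V →ₗ[R] W) (y1 : ι → V ⊗[R] V →ₗ[R] W)
    (y2 : ι → V ⊗[R] (V ⊗[R] V) →ₗ[R] W) {s u t : ι}
    (chen2 : X2 s t - X2 s u - X2 u t = (x u - x s) ⊗ₜ[R] (x t - x u))
    (chen3 : X3 s t - X3 s u - X3 u t =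
      TensorProduct.assoc R V V V (X2 s u ⊗ₜ[R] (x t - x u)) + (x u - x s) ⊗ₜ[R] X2 u t) :
    (yhat s (x t - x s) + y1 s (X2 s t) + y2 s (X3 s t)) -
        (yhat s (x u - x s) + y1 s (X2 s u) + y2 s (X3 s u)) -
        (yhat u (x t - x u) + y1 u (X2 u t) + y2 u (X3 u t)) =
      -(yhat u (x t - x u) - yhat s (x t - x u) - y1 s ((x u - x s) ⊗ₜ[R] (x t - x u)) -
          y2 s (TensorProduct.assoc R V V V (X2 s u ⊗ₜ[R] (x t - x u)))) -
        (y1 u (X2 u t) - y1 s (X2 u t) - y2 s ((x u - x s) ⊗ₜ[R] X2 u t)) +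
        (y2 s - y2 u) (X3 u t) := by
  have hx : x t - x s = (x u - x s) + (x t - x u) := by abel
  rw [hx, sub_eq_iff_eq_add'.mp (sub_eq_iff_eq_add'.mp chen2),
    sub_eq_iff_eq_add'.mp (sub_eq_iff_eq_add'.mp chen3)]
  simp only [map_add, LinearMap.sub_apply]
  abel

end ChenCoherence

theorem sewing_coherence_second_order_general {m : ℕ} (T : ℝ)
    (W : Type*) [NormedAddCommGroup W] [NormedSpace ℝ W]
    (x : ℝ → EuclideanSpace ℝ (Fin m))
    (X2 : ℝ → ℝ → EuclideanSpace ℝ (Fin m) ⊗[ℝ] EuclideanSpace ℝ (Fin m))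
    (X3 : ℝ → ℝ → EuclideanSpace ℝ (Fin m) ⊗[ℝ]
      (EuclideanSpace ℝ (Fin m) ⊗[ℝ] EuclideanSpace ℝ (Fin m)))
    (chen2 : ∀ s ∈ Set.Icc (0 : ℝ) T, ∀ u ∈ Set.Icc (0 : ℝ) T,
      ∀ t ∈ Set.Icc (0 : ℝ) T,
      X2 s t - X2 s u - X2 u t = (x u - x s) ⊗ₜ[ℝ] (x t - x u))
    (chen3 : ∀ s ∈ Set.Icc (0 : ℝ) T, ∀ u ∈ Set.Icc (0 : ℝ) T,
      ∀ t ∈ Set.Icc (0 : ℝ) T,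
      X3 s t - X3 s u - X3 u t =
        (TensorProduct.assoc ℝ (EuclideanSpace ℝ (Fin m))
            (EuclideanSpace ℝ (Fin m)) (EuclideanSpace ℝ (Fin m)))
          (X2 s u ⊗ₜ[ℝ] (x t - x u)) + (x u - x s) ⊗ₜ[ℝ] X2 u t)
    (yhat : ℝ → (EuclideanSpace ℝ (Fin m) →ₗ[ℝ] W))
    (y1 : ℝ → (EuclideanSpace ℝ (Fin m) ⊗[ℝ] EuclideanSpace ℝ (Fin m) →ₗ[ℝ] W))
    (y2 : ℝ → (EuclideanSpace ℝ (Fin m) ⊗[ℝ]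
      (EuclideanSpace ℝ (Fin m) ⊗[ℝ] EuclideanSpace ℝ (Fin m)) →ₗ[ℝ] W))
    (R3 : ℝ → ℝ → EuclideanSpace ℝ (Fin m) → W)
    (hR3 : ∀ s t v, R3 s t v =
      yhat t v - yhat s v - y1 s ((x t - x s) ⊗ₜ[ℝ] v) -
        y2 s ((TensorProduct.assoc ℝ (EuclideanSpace ℝ (Fin m))
            (EuclideanSpace ℝ (Fin m)) (EuclideanSpace ℝ (Fin m)))
          (X2 s t ⊗ₜ[ℝ] v)))
    (R2 : ℝ → ℝ →
      EuclideanSpace ℝ (Fin m) ⊗[ℝ] EuclideanSpace ℝ (Fin m) → W)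
    (hR2 : ∀ s t w, R2 s t w =
      y1 t w - y1 s w - y2 s ((x t - x s) ⊗ₜ[ℝ] w))
    (J : ℝ → ℝ → W)
    (hJ : ∀ s t, J s t = yhat s (x t - x s) + y1 s (X2 s t) + y2 s (X3 s t)) :
    ∀ s ∈ Set.Icc (0 : ℝ) T, ∀ u ∈ Set.Icc (0 : ℝ) T, ∀ t ∈ Set.Icc (0 : ℝ) T,
      s ≤ u → u ≤ t →
      J s t - J s u - J u t =
        -R3 s u (x t - x u) - R2 s u (X2 u t) + (y2 s - y2 u) (X3 u t) := by
  intro s hs u hu t ht _ _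
  rw [hJ, hJ, hJ, hR3, hR2]
  exact local_approx_sub_sub_eq_of_chen x X2 X3 yhat y1 y2
    (chen2 s hs u hu t ht) (chen3 s hs u hu t ht)

/-- Coherence (additivity defect) identity for the local approximation
`J_{s,t} = ŷ(s) x_{s,t} + ŷ⁽¹⁾(s) 𝕏²_{s,t} + ŷ⁽²⁾(s) 𝕏³_{s,t}` of a path
controlled by a rough path `(x, 𝕏², 𝕏³)` with second-order Gubinelli
derivatives, used in the sewing construction of the rough integral. -/
theorem sewing_coherence_second_order {m : ℕ} (T : ℝ) (hT : 0 < T)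
    (W : Type*) [NormedAddCommGroup W] [NormedSpace ℝ W] [FiniteDimensional ℝ W]
    (x : ℝ → EuclideanSpace ℝ (Fin m))
    (X2 : ℝ → ℝ → EuclideanSpace ℝ (Fin m) ⊗[ℝ] EuclideanSpace ℝ (Fin m))
    (X3 : ℝ → ℝ → EuclideanSpace ℝ (Fin m) ⊗[ℝ]
      (EuclideanSpace ℝ (Fin m) ⊗[ℝ] EuclideanSpace ℝ (Fin m)))
    (chen2 : ∀ s ∈ Set.Icc (0 : ℝ) T, ∀ u ∈ Set.Icc (0 : ℝ) T,
      ∀ t ∈ Set.Icc (0 : ℝ) T,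
      X2 s t - X2 s u - X2 u t = (x u - x s) ⊗ₜ[ℝ] (x t - x u))
    (chen3 : ∀ s ∈ Set.Icc (0 : ℝ) T, ∀ u ∈ Set.Icc (0 : ℝ) T,
      ∀ t ∈ Set.Icc (0 : ℝ) T,
      X3 s t - X3 s u - X3 u t =
        (TensorProduct.assoc ℝ (EuclideanSpace ℝ (Fin m))
            (EuclideanSpace ℝ (Fin m)) (EuclideanSpace ℝ (Fin m)))
          (X2 s u ⊗ₜ[ℝ] (x t - x u)) + (x u - x s) ⊗ₜ[ℝ] X2 u t)
    (yhat : ℝ → (EuclideanSpace ℝ (Fin m) →ₗ[ℝ] W))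
    (y1 : ℝ → (EuclideanSpace ℝ (Fin m) ⊗[ℝ] EuclideanSpace ℝ (Fin m) →ₗ[ℝ] W))
    (y2 : ℝ → (EuclideanSpace ℝ (Fin m) ⊗[ℝ]
      (EuclideanSpace ℝ (Fin m) ⊗[ℝ] EuclideanSpace ℝ (Fin m)) →ₗ[ℝ] W))
    (R3 : ℝ → ℝ → EuclideanSpace ℝ (Fin m) → W)
    (hR3 : ∀ s t v, R3 s t v =
      yhat t v - yhat s v - y1 s ((x t - x s) ⊗ₜ[ℝ] v) -
        y2 s ((TensorProduct.assoc ℝ (EuclideanSpace ℝ (Fin m))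
            (EuclideanSpace ℝ (Fin m)) (EuclideanSpace ℝ (Fin m)))
          (X2 s t ⊗ₜ[ℝ] v)))
    (R2 : ℝ → ℝ →
      EuclideanSpace ℝ (Fin m) ⊗[ℝ] EuclideanSpace ℝ (Fin m) → W)
    (hR2 : ∀ s t w, R2 s t w =
      y1 t w - y1 s w - y2 s ((x t - x s) ⊗ₜ[ℝ] w))
    (J : ℝ → ℝ → W)
    (hJ : ∀ s t, J s t = yhat s (x t - x s) + y1 s (X2 s t) + y2 s (X3 s t)) :
    ∀ s ∈ Set.Icc (0 : ℝ) T, ∀ u ∈ Set.Icc (0 : ℝ) T, ∀ t ∈ Set.Icc (0 : ℝ) T,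
      s ≤ u → u ≤ t →
      J s t - J s u - J u t =
        -R3 s u (x t - x u) - R2 s u (X2 u t) + (y2 s - y2 u) (X3 u t) :=
  sewing_coherence_second_order_general T W x X2 X3 chen2 chen3 yhat y1 y2 R3 hR3 R2 hR2 J hJ
end
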